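/- arXiv:2402.12166 — 3 statements merged into one kernel-verified Lean document; each statement's English description precedes it below -/
import Mathlib

section
/- Let γ : I → ℝ² be a C^∞ curve on an open interval I containing 0 with γ'(0) = γ''(0) = γ'''(0) = 0 and γ⁽⁴⁾(0) ≠ 0, and let κ_q(γ) = (−77B² + 105AD + 60AC)/‖γ⁽⁴⁾(0)‖⁵ be its (4,5;±7)-cuspidal curvature. Then: (i) for every C^∞ diffeomorphism germ ψ : (ℝ, 0) → (ℝ, 0) one has κ_q(γ ∘ ψ) = κ_q(γ); (ii) for every congruent transformation Φ(x) = Qx + c of ℝ² with Q a 2×2 orthogonal matrix and c ∈ ℝ², one has κ_q(Φ ∘ γ) = κ_q(γ). -/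
open Filter Topology
open scoped ContDiff

/-- The determinant of the 2×2 matrix with columns `u` and `v`. -/
def det2 (u v : ℝ × ℝ) : ℝ := u.1 * v.2 - u.2 * v.1

/-- `Φ` is a `C^r` diffeomorphism germ at the origin (fixing the origin), with
inverse germ `Φinv`. -/
def IsDiffeoGermAt0 {E : Type*} [NormedAddCommGroup E] [NormedSpace ℝ E]
    (r : WithTop ℕ∞) (Φ Φinv : E → E) : Prop :=
  Φ 0 = 0 ∧ Φinv 0 = 0 ∧ ContDiffAt ℝ r Φ 0 ∧ ContDiffAt ℝ r Φinv 0 ∧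
    (∀ᶠ x in nhds (0 : E), Φinv (Φ x) = x) ∧ (∀ᶠ x in nhds (0 : E), Φ (Φinv x) = x)

/-- Two map germs `γ₁ γ₂ : (ℝ,0) → (ℝ²,0)` are `C^r`-equivalent at `t = 0`:
there are `C^r` diffeomorphism germs `ψ : (ℝ,0) → (ℝ,0)` and `Ψ : (ℝ²,0) → (ℝ²,0)`
with `Ψ ∘ γ₁ = γ₂ ∘ ψ` near `0`.  For `r = ∞` this is 𝒜-equivalence, for
`r = 1` it is `C¹`-equivalence. -/
def CEquivAt0 (r : WithTop ℕ∞) (γ₁ γ₂ : ℝ → ℝ × ℝ) : Prop :=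
  γ₁ 0 = 0 ∧ γ₂ 0 = 0 ∧
    ∃ (ψ ψinv : ℝ → ℝ) (Ψ Ψinv : ℝ × ℝ → ℝ × ℝ),
      IsDiffeoGermAt0 r ψ ψinv ∧ IsDiffeoGermAt0 r Ψ Ψinv ∧
      ∀ᶠ t in nhds (0 : ℝ), Ψ (γ₁ t) = γ₂ (ψ t)

/-- `A = det(γ⁽⁵⁾(0), γ⁽⁴⁾(0))`. -/
noncomputable def Adet (γ : ℝ → ℝ × ℝ) : ℝ := det2 (iteratedDeriv 5 γ 0) (iteratedDeriv 4 γ 0)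

/-- `B = det(γ⁽⁶⁾(0), γ⁽⁴⁾(0))`. -/
noncomputable def Bdet (γ : ℝ → ℝ × ℝ) : ℝ := det2 (iteratedDeriv 6 γ 0) (iteratedDeriv 4 γ 0)

/-- `C = det(γ⁽⁷⁾(0), γ⁽⁴⁾(0))`. -/
noncomputable def Cdet (γ : ℝ → ℝ × ℝ) : ℝ := det2 (iteratedDeriv 7 γ 0) (iteratedDeriv 4 γ 0)

/-- `D = det(γ⁽⁶⁾(0), γ⁽⁵⁾(0))`. -/
noncomputable def Ddet (γ : ℝ → ℝ × ℝ) : ℝ := det2 (iteratedDeriv 6 γ 0) (iteratedDeriv 5 γ 0)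

/-- The expression `−77B² + 105AD + 60AC`. -/
noncomputable def cuspInv45 (γ : ℝ → ℝ × ℝ) : ℝ :=
  -77 * Bdet γ ^ 2 + 105 * Adet γ * Ddet γ + 60 * Adet γ * Cdet γ

/-- The Euclidean norm on `ℝ²`. -/
noncomputable def norm2 (u : ℝ × ℝ) : ℝ := Real.sqrt (u.1 ^ 2 + u.2 ^ 2)

/-- The `(4,5;±7)`-cuspidal curvature `κ_q = (−77B² + 105AD + 60AC)/‖γ⁽⁴⁾(0)‖⁵`. -/
noncomputable def kappaQ (γ : ℝ → ℝ × ℝ) : ℝ :=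
  cuspInv45 γ / norm2 (iteratedDeriv 4 γ 0) ^ 5



lemma hasDerivAt_iteratedDeriv_of_contDiffOn {E : Type*} [NormedAddCommGroup E] [NormedSpace ℝ E]
    {f : ℝ → E} {U : Set ℝ} {n : WithTop ℕ∞} (hf : ContDiffOn ℝ n f U) (hU : IsOpen U)
    {t : ℝ} (ht : t ∈ U) {m : ℕ} (hm : (m : WithTop ℕ∞) < n) :
    HasDerivAt (iteratedDeriv m f) (iteratedDeriv (m+1) f t) t := by
  have heq : ∀ y ∈ U, iteratedDerivWithin m f U y = iteratedDeriv m f y := by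
    intro y hy
    rw [iteratedDerivWithin_eq_iteratedFDerivWithin, iteratedDeriv_eq_iteratedFDeriv,
      iteratedFDerivWithin_of_isOpen m hU hy]
  have h1 : DifferentiableWithinAt ℝ (iteratedDerivWithin m f U) U t :=
    hf.differentiableOn_iteratedDerivWithin hm hU.uniqueDiffOn t ht
  have h2 : DifferentiableAt ℝ (iteratedDeriv m f) t := by
    have := (h1.congr (fun y hy => (heq y hy).symm) (heq t ht).symm).differentiableAt (hU.mem_nhds ht)
    exact this
  have h3 := h2.hasDerivAt
  rwa [← iteratedDeriv_succ] at h3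

lemma faa7 {E : Type*} [NormedAddCommGroup E] [NormedSpace ℝ E]
    (ψ : ℝ → ℝ) (γ : ℝ → E) (U : Set ℝ) (hU : IsOpen U)
    (hu : ∀ t ∈ U, ∀ k, k ≤ 6 → HasDerivAt (iteratedDeriv k ψ) (iteratedDeriv (k+1) ψ t) t)
    (hg : ∀ t ∈ U, ∀ k, k ≤ 6 → HasDerivAt (iteratedDeriv k γ) (iteratedDeriv (k+1) γ (ψ t)) (ψ t)) :
    ∀ t ∈ U,
      (iteratedDeriv 4 (γ ∘ ψ) t = iteratedDeriv 4 ψ t • iteratedDeriv 1 γ (ψ t) + (4 * iteratedDeriv 1 ψ t * iteratedDeriv 3 ψ t + 3 * iteratedDeriv 2 ψ t ^ 2) • iteratedDeriv 2 γ (ψ t) + (6 * iteratedDeriv 1 ψ t ^ 2 * iteratedDeriv 2 ψ t) • iteratedDeriv 3 γ (ψ t) + iteratedDeriv 1 ψ t ^ 4 • iteratedDeriv 4 γ (ψ t)) ∧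
      (iteratedDeriv 5 (γ ∘ ψ) t = iteratedDeriv 5 ψ t • iteratedDeriv 1 γ (ψ t) + (5 * iteratedDeriv 1 ψ t * iteratedDeriv 4 ψ t + 10 * iteratedDeriv 2 ψ t * iteratedDeriv 3 ψ t) • iteratedDeriv 2 γ (ψ t) + (10 * iteratedDeriv 1 ψ t ^ 2 * iteratedDeriv 3 ψ t + 15 * iteratedDeriv 1 ψ t * iteratedDeriv 2 ψ t ^ 2) • iteratedDeriv 3 γ (ψ t) + (10 * iteratedDeriv 1 ψ t ^ 3 * iteratedDeriv 2 ψ t) • iteratedDeriv 4 γ (ψ t) + iteratedDeriv 1 ψ t ^ 5 • iteratedDeriv 5 γ (ψ t)) ∧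
      (iteratedDeriv 6 (γ ∘ ψ) t = iteratedDeriv 6 ψ t • iteratedDeriv 1 γ (ψ t) + (6 * iteratedDeriv 1 ψ t * iteratedDeriv 5 ψ t + 15 * iteratedDeriv 2 ψ t * iteratedDeriv 4 ψ t + 10 * iteratedDeriv 3 ψ t ^ 2) • iteratedDeriv 2 γ (ψ t) + (15 * iteratedDeriv 1 ψ t ^ 2 * iteratedDeriv 4 ψ t + 60 * iteratedDeriv 1 ψ t * iteratedDeriv 2 ψ t * iteratedDeriv 3 ψ t + 15 * iteratedDeriv 2 ψ t ^ 3) • iteratedDeriv 3 γ (ψ t) + (20 * iteratedDeriv 1 ψ t ^ 3 * iteratedDeriv 3 ψ t + 45 * iteratedDeriv 1 ψ t ^ 2 * iteratedDeriv 2 ψ t ^ 2) • iteratedDeriv 4 γ (ψ t) + (15 * iteratedDeriv 1 ψ t ^ 4 * iteratedDeriv 2 ψ t) • iteratedDeriv 5 γ (ψ t) + iteratedDeriv 1 ψ t ^ 6 • iteratedDeriv 6 γ (ψ t)) ∧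
      (iteratedDeriv 7 (γ ∘ ψ) t = iteratedDeriv 7 ψ t • iteratedDeriv 1 γ (ψ t) + (7 * iteratedDeriv 1 ψ t * iteratedDeriv 6 ψ t + 21 * iteratedDeriv 2 ψ t * iteratedDeriv 5 ψ t + 35 * iteratedDeriv 3 ψ t * iteratedDeriv 4 ψ t) • iteratedDeriv 2 γ (ψ t) + (21 * iteratedDeriv 1 ψ t ^ 2 * iteratedDeriv 5 ψ t + 105 * iteratedDeriv 1 ψ t * iteratedDeriv 2 ψ t * iteratedDeriv 4 ψ t + 70 * iteratedDeriv 1 ψ t * iteratedDeriv 3 ψ t ^ 2 + 105 * iteratedDeriv 2 ψ t ^ 2 * iteratedDeriv 3 ψ t) • iteratedDeriv 3 γ (ψ t) + (35 * iteratedDeriv 1 ψ t ^ 3 * iteratedDeriv 4 ψ t + 210 * iteratedDeriv 1 ψ t ^ 2 * iteratedDeriv 2 ψ t * iteratedDeriv 3 ψ t + 105 * iteratedDeriv 1 ψ t * iteratedDeriv 2 ψ t ^ 3) • iteratedDeriv 4 γ (ψ t) + (35 * iteratedDeriv 1 ψ t ^ 4 * iteratedDeriv 3 ψ t + 105 * iteratedDeriv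 1 ψ t ^ 3 * iteratedDeriv 2 ψ t ^ 2) • iteratedDeriv 5 γ (ψ t) + (21 * iteratedDeriv 1 ψ t ^ 5 * iteratedDeriv 2 ψ t) • iteratedDeriv 6 γ (ψ t) + iteratedDeriv 1 ψ t ^ 7 • iteratedDeriv 7 γ (ψ t)) := by
  have hψd : ∀ t ∈ U, HasDerivAt ψ (iteratedDeriv 1 ψ t) t := by
    intro t ht
    have h := hu t ht 0 (by norm_num)
    rwa [iteratedDeriv_zero] at h
  have hgc : ∀ t ∈ U, ∀ k, k ≤ 6 → HasDerivAt (fun s => iteratedDeriv k γ (ψ s))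
      (iteratedDeriv 1 ψ t • iteratedDeriv (k+1) γ (ψ t)) t := by
    intro t ht k hk
    exact (hg t ht k hk).scomp t (hψd t ht)
  have key1 : ∀ t ∈ U, HasDerivAt (fun s => iteratedDeriv 1 ψ s • iteratedDeriv 1 γ (ψ s))
      (iteratedDeriv 2 ψ t • iteratedDeriv 1 γ (ψ t) + iteratedDeriv 1 ψ t ^ 2 • iteratedDeriv 2 γ (ψ t)) t := by
    intro t ht
    have h := ((hu t ht 1 (by norm_num)).smul (hgc t ht 1 (by norm_num)))
    refine h.congr_deriv ?_
    simp only [Nat.reduceAdd, Nat.reduceSub, Pi.pow_apply, Pi.mul_apply, Pi.add_apply, Nat.cast_ofNat]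
    module
  have key2 : ∀ t ∈ U, HasDerivAt (fun s => iteratedDeriv 2 ψ s • iteratedDeriv 1 γ (ψ s) + iteratedDeriv 1 ψ s ^ 2 • iteratedDeriv 2 γ (ψ s))
      (iteratedDeriv 3 ψ t • iteratedDeriv 1 γ (ψ t) + (3 * iteratedDeriv 1 ψ t * iteratedDeriv 2 ψ t) • iteratedDeriv 2 γ (ψ t) + iteratedDeriv 1 ψ t ^ 3 • iteratedDeriv 3 γ (ψ t)) t := by
    intro t ht
    have h := (((hu t ht 2 (by norm_num)).smul (hgc t ht 1 (by norm_num))).add (((hu t ht 1 (by norm_num)).pow 2).smul (hgc t ht 2 (by norm_num))))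
    refine h.congr_deriv ?_
    simp only [Nat.reduceAdd, Nat.reduceSub, Pi.pow_apply, Pi.mul_apply, Pi.add_apply, Nat.cast_ofNat]
    module
  have key3 : ∀ t ∈ U, HasDerivAt (fun s => iteratedDeriv 3 ψ s • iteratedDeriv 1 γ (ψ s) + (3 * iteratedDeriv 1 ψ s * iteratedDeriv 2 ψ s) • iteratedDeriv 2 γ (ψ s) + iteratedDeriv 1 ψ s ^ 3 • iteratedDeriv 3 γ (ψ s))
      (iteratedDeriv 4 ψ t • iteratedDeriv 1 γ (ψ t) + (4 * iteratedDeriv 1 ψ t * iteratedDeriv 3 ψ t + 3 * iteratedDeriv 2 ψ t ^ 2) • iteratedDeriv 2 γ (ψ t) + (6 * iteratedDeriv 1 ψ t ^ 2 * iteratedDeriv 2 ψ t) • iteratedDeriv 3 γ (ψ t) + iteratedDeriv 1 ψ t ^ 4 • iteratedDeriv 4 γ (ψ t)) t := by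
    intro t ht
    have h := ((((hu t ht 3 (by norm_num)).smul (hgc t ht 1 (by norm_num))).add ((((hu t ht 1 (by norm_num)).const_mul (3:ℝ)).mul (hu t ht 2 (by norm_num))).smul (hgc t ht 2 (by norm_num)))).add (((hu t ht 1 (by norm_num)).pow 3).smul (hgc t ht 3 (by norm_num))))
    refine h.congr_deriv ?_
    simp only [Nat.reduceAdd, Nat.reduceSub, Pi.pow_apply, Pi.mul_apply, Pi.add_apply, Nat.cast_ofNat]
    module
  have key4 : ∀ t ∈ U, HasDerivAt (fun s => iteratedDeriv 4 ψ s • iteratedDeriv 1 γ (ψ s) + (4 * iteratedDeriv 1 ψ s * iteratedDeriv 3 ψ s + 3 * iteratedDeriv 2 ψ s ^ 2) • iteratedDeriv 2 γ (ψ s) + (6 * iteratedDeriv 1 ψ s ^ 2 * iteratedDeriv 2 ψ s) • iteratedDeriv 3 γ (ψ s) + iteratedDeriv 1 ψ s ^ 4 • iteratedDeriv 4 γ (ψ s))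
      (iteratedDeriv 5 ψ t • iteratedDeriv 1 γ (ψ t) + (5 * iteratedDeriv 1 ψ t * iteratedDeriv 4 ψ t + 10 * iteratedDeriv 2 ψ t * iteratedDeriv 3 ψ t) • iteratedDeriv 2 γ (ψ t) + (10 * iteratedDeriv 1 ψ t ^ 2 * iteratedDeriv 3 ψ t + 15 * iteratedDeriv 1 ψ t * iteratedDeriv 2 ψ t ^ 2) • iteratedDeriv 3 γ (ψ t) + (10 * iteratedDeriv 1 ψ t ^ 3 * iteratedDeriv 2 ψ t) • iteratedDeriv 4 γ (ψ t) + iteratedDeriv 1 ψ t ^ 5 • iteratedDeriv 5 γ (ψ t)) t := by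
    intro t ht
    have h := (((((hu t ht 4 (by norm_num)).smul (hgc t ht 1 (by norm_num))).add (((((hu t ht 1 (by norm_num)).const_mul (4:ℝ)).mul (hu t ht 3 (by norm_num))).add (((hu t ht 2 (by norm_num)).pow 2).const_mul (3:ℝ))).smul (hgc t ht 2 (by norm_num)))).add (((((hu t ht 1 (by norm_num)).pow 2).const_mul (6:ℝ)).mul (hu t ht 2 (by norm_num))).smul (hgc t ht 3 (by norm_num)))).add (((hu t ht 1 (by norm_num)).pow 4).smul (hgc t ht 4 (by norm_num))))
    refine h.congr_deriv ?_
    simp only [Nat.reduceAdd, Nat.reduceSub, Pi.pow_apply, Pi.mul_apply, Pi.add_apply, Nat.cast_ofNat]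
    module
  have key5 : ∀ t ∈ U, HasDerivAt (fun s => iteratedDeriv 5 ψ s • iteratedDeriv 1 γ (ψ s) + (5 * iteratedDeriv 1 ψ s * iteratedDeriv 4 ψ s + 10 * iteratedDeriv 2 ψ s * iteratedDeriv 3 ψ s) • iteratedDeriv 2 γ (ψ s) + (10 * iteratedDeriv 1 ψ s ^ 2 * iteratedDeriv 3 ψ s + 15 * iteratedDeriv 1 ψ s * iteratedDeriv 2 ψ s ^ 2) • iteratedDeriv 3 γ (ψ s) + (10 * iteratedDeriv 1 ψ s ^ 3 * iteratedDeriv 2 ψ s) • iteratedDeriv 4 γ (ψ s) + iteratedDeriv 1 ψ s ^ 5 • iteratedDeriv 5 γ (ψ s))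
      (iteratedDeriv 6 ψ t • iteratedDeriv 1 γ (ψ t) + (6 * iteratedDeriv 1 ψ t * iteratedDeriv 5 ψ t + 15 * iteratedDeriv 2 ψ t * iteratedDeriv 4 ψ t + 10 * iteratedDeriv 3 ψ t ^ 2) • iteratedDeriv 2 γ (ψ t) + (15 * iteratedDeriv 1 ψ t ^ 2 * iteratedDeriv 4 ψ t + 60 * iteratedDeriv 1 ψ t * iteratedDeriv 2 ψ t * iteratedDeriv 3 ψ t + 15 * iteratedDeriv 2 ψ t ^ 3) • iteratedDeriv 3 γ (ψ t) + (20 * iteratedDeriv 1 ψ t ^ 3 * iteratedDeriv 3 ψ t + 45 * iteratedDeriv 1 ψ t ^ 2 * iteratedDeriv 2 ψ t ^ 2) • iteratedDeriv 4 γ (ψ t) + (15 * iteratedDeriv 1 ψ t ^ 4 * iteratedDeriv 2 ψ t) • iteratedDeriv 5 γ (ψ t) + iteratedDeriv 1 ψ t ^ 6 • iteratedDeriv 6 γ (ψ t)) t := by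
    intro t ht
    have h := ((((((hu t ht 5 (by norm_num)).smul (hgc t ht 1 (by norm_num))).add (((((hu t ht 1 (by norm_num)).const_mul (5:ℝ)).mul (hu t ht 4 (by norm_num))).add (((hu t ht 2 (by norm_num)).const_mul (10:ℝ)).mul (hu t ht 3 (by norm_num)))).smul (hgc t ht 2 (by norm_num)))).add ((((((hu t ht 1 (by norm_num)).pow 2).const_mul (10:ℝ)).mul (hu t ht 3 (by norm_num))).add (((hu t ht 1 (by norm_num)).const_mul (15:ℝ)).mul ((hu t ht 2 (by norm_num)).pow 2))).smul (hgc t ht 3 (by norm_num)))).add (((((hu t ht 1 (by norm_num)).pow 3).const_mul (10:ℝ)).mul (hu t ht 2 (by norm_num))).smul (hgc t ht 4 (by norm_num)))).add (((hu t ht 1 (by norm_num)).pow 5).smul (hgc t ht 5 (by norm_num))))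
    refine h.congr_deriv ?_
    simp only [Nat.reduceAdd, Nat.reduceSub, Pi.pow_apply, Pi.mul_apply, Pi.add_apply, Nat.cast_ofNat]
    module
  have key6 : ∀ t ∈ U, HasDerivAt (fun s => iteratedDeriv 6 ψ s • iteratedDeriv 1 γ (ψ s) + (6 * iteratedDeriv 1 ψ s * iteratedDeriv 5 ψ s + 15 * iteratedDeriv 2 ψ s * iteratedDeriv 4 ψ s + 10 * iteratedDeriv 3 ψ s ^ 2) • iteratedDeriv 2 γ (ψ s) + (15 * iteratedDeriv 1 ψ s ^ 2 * iteratedDeriv 4 ψ s + 60 * iteratedDeriv 1 ψ s * iteratedDeriv 2 ψ s * iteratedDeriv 3 ψ s + 15 * iteratedDeriv 2 ψ s ^ 3) • iteratedDeriv 3 γ (ψ s) + (20 * iteratedDeriv 1 ψ s ^ 3 * iteratedDeriv 3 ψ s + 45 * iteratedDeriv 1 ψ s ^ 2 * iteratedDeriv 2 ψ s ^ 2) • iteratedDeriv 4 γ (ψ s) + (15 * iteratedDeriv 1 ψ s ^ 4 * iteratedDeriv 2 ψ s) • iteratedDeriv 5 γ (ψ s) + iteratedDeriv 1 ψ s ^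 6 • iteratedDeriv 6 γ (ψ s))
      (iteratedDeriv 7 ψ t • iteratedDeriv 1 γ (ψ t) + (7 * iteratedDeriv 1 ψ t * iteratedDeriv 6 ψ t + 21 * iteratedDeriv 2 ψ t * iteratedDeriv 5 ψ t + 35 * iteratedDeriv 3 ψ t * iteratedDeriv 4 ψ t) • iteratedDeriv 2 γ (ψ t) + (21 * iteratedDeriv 1 ψ t ^ 2 * iteratedDeriv 5 ψ t + 105 * iteratedDeriv 1 ψ t * iteratedDeriv 2 ψ t * iteratedDeriv 4 ψ t + 70 * iteratedDeriv 1 ψ t * iteratedDeriv 3 ψ t ^ 2 + 105 * iteratedDeriv 2 ψ t ^ 2 * iteratedDeriv 3 ψ t) • iteratedDeriv 3 γ (ψ t) + (35 * iteratedDeriv 1 ψ t ^ 3 * iteratedDeriv 4 ψ t + 210 * iteratedDeriv 1 ψ t ^ 2 * iteratedDeriv 2 ψ t * iteratedDeriv 3 ψ t + 105 * iteratedDeriv 1 ψ t * iteratedDeriv 2 ψ t ^ 3) • iteratedDeriv 4 γ (ψ t) + (35 * iteratedDeriv 1 ψ t ^ 4 * iteratedDeriv 3 ψ t + 105 * iteratedDeriv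 1 ψ t ^ 3 * iteratedDeriv 2 ψ t ^ 2) • iteratedDeriv 5 γ (ψ t) + (21 * iteratedDeriv 1 ψ t ^ 5 * iteratedDeriv 2 ψ t) • iteratedDeriv 6 γ (ψ t) + iteratedDeriv 1 ψ t ^ 7 • iteratedDeriv 7 γ (ψ t)) t := by
    intro t ht
    have h := (((((((hu t ht 6 (by norm_num)).smul (hgc t ht 1 (by norm_num))).add ((((((hu t ht 1 (by norm_num)).const_mul (6:ℝ)).mul (hu t ht 5 (by norm_num))).add (((hu t ht 2 (by norm_num)).const_mul (15:ℝ)).mul (hu t ht 4 (by norm_num)))).add (((hu t ht 3 (by norm_num)).pow 2).const_mul (10:ℝ))).smul (hgc t ht 2 (by norm_num)))).add (((((((hu t ht 1 (by norm_num)).pow 2).const_mul (15:ℝ)).mul (hu t ht 4 (by norm_num))).add ((((hu t ht 1 (by norm_num)).const_mul (60:ℝ)).mul (hu t ht 2 (by norm_num))).mul (hu t ht 3 (by norm_num)))).add (((hu t ht 2 (by norm_num)).pow 3).const_mul (15:ℝ))).smul (hgc t ht 3 (by norm_num)))).add ((((((hu t ht 1 (by norm_num)).pow 3).const_mul (20:ℝ)).mul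 (hu t ht 3 (by norm_num))).add ((((hu t ht 1 (by norm_num)).pow 2).const_mul (45:ℝ)).mul ((hu t ht 2 (by norm_num)).pow 2))).smul (hgc t ht 4 (by norm_num)))).add (((((hu t ht 1 (by norm_num)).pow 4).const_mul (15:ℝ)).mul (hu t ht 2 (by norm_num))).smul (hgc t ht 5 (by norm_num)))).add (((hu t ht 1 (by norm_num)).pow 6).smul (hgc t ht 6 (by norm_num))))
    refine h.congr_deriv ?_
    simp only [Nat.reduceAdd, Nat.reduceSub, Pi.pow_apply, Pi.mul_apply, Pi.add_apply, Nat.cast_ofNat]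
    module
  have E1 : ∀ t ∈ U, iteratedDeriv 1 (γ ∘ ψ) t = iteratedDeriv 1 ψ t • iteratedDeriv 1 γ (ψ t) := by
    intro t ht
    rw [iteratedDeriv_one]
    have h := (hgc t ht 0 (by norm_num))
    rw [iteratedDeriv_zero] at h
    exact h.deriv
  have E2 : ∀ t ∈ U, iteratedDeriv 2 (γ ∘ ψ) t = iteratedDeriv 2 ψ t • iteratedDeriv 1 γ (ψ t) + iteratedDeriv 1 ψ t ^ 2 • iteratedDeriv 2 γ (ψ t) := by
    intro t ht
    rw [iteratedDeriv_succ]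
    have hev : iteratedDeriv 1 (γ ∘ ψ) =ᶠ[𝓝 t] (fun s => iteratedDeriv 1 ψ s • iteratedDeriv 1 γ (ψ s)) :=
      Filter.eventuallyEq_of_mem (hU.mem_nhds ht) E1
    rw [hev.deriv_eq, (key1 t ht).deriv]
  have E3 : ∀ t ∈ U, iteratedDeriv 3 (γ ∘ ψ) t = iteratedDeriv 3 ψ t • iteratedDeriv 1 γ (ψ t) + (3 * iteratedDeriv 1 ψ t * iteratedDeriv 2 ψ t) • iteratedDeriv 2 γ (ψ t) + iteratedDeriv 1 ψ t ^ 3 • iteratedDeriv 3 γ (ψ t) := by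
    intro t ht
    rw [iteratedDeriv_succ]
    have hev : iteratedDeriv 2 (γ ∘ ψ) =ᶠ[𝓝 t] (fun s => iteratedDeriv 2 ψ s • iteratedDeriv 1 γ (ψ s) + iteratedDeriv 1 ψ s ^ 2 • iteratedDeriv 2 γ (ψ s)) :=
      Filter.eventuallyEq_of_mem (hU.mem_nhds ht) E2
    rw [hev.deriv_eq, (key2 t ht).deriv]
  have E4 : ∀ t ∈ U, iteratedDeriv 4 (γ ∘ ψ) t = iteratedDeriv 4 ψ t • iteratedDeriv 1 γ (ψ t) + (4 * iteratedDeriv 1 ψ t * iteratedDeriv 3 ψ t + 3 * iteratedDeriv 2 ψ t ^ 2) • iteratedDeriv 2 γ (ψ t) + (6 * iteratedDeriv 1 ψ t ^ 2 * iteratedDeriv 2 ψ t) • iteratedDeriv 3 γ (ψ t) + iteratedDeriv 1 ψ t ^ 4 • iteratedDeriv 4 γ (ψ t) := by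
    intro t ht
    rw [iteratedDeriv_succ]
    have hev : iteratedDeriv 3 (γ ∘ ψ) =ᶠ[𝓝 t] (fun s => iteratedDeriv 3 ψ s • iteratedDeriv 1 γ (ψ s) + (3 * iteratedDeriv 1 ψ s * iteratedDeriv 2 ψ s) • iteratedDeriv 2 γ (ψ s) + iteratedDeriv 1 ψ s ^ 3 • iteratedDeriv 3 γ (ψ s)) :=
      Filter.eventuallyEq_of_mem (hU.mem_nhds ht) E3
    rw [hev.deriv_eq, (key3 t ht).deriv]
  have E5 : ∀ t ∈ U, iteratedDeriv 5 (γ ∘ ψ) t = iteratedDeriv 5 ψ t • iteratedDeriv 1 γ (ψ t) + (5 * iteratedDeriv 1 ψ t * iteratedDeriv 4 ψ t + 10 * iteratedDeriv 2 ψ t * iteratedDeriv 3 ψ t) • iteratedDeriv 2 γ (ψ t) + (10 * iteratedDeriv 1 ψ t ^ 2 * iteratedDeriv 3 ψ t + 15 * iteratedDeriv 1 ψ t * iteratedDeriv 2 ψ t ^ 2) • iteratedDeriv 3 γ (ψ t) + (10 * iteratedDeriv 1 ψ t ^ 3 * iteratedDeriv 2 ψ t) • iteratedDeriv 4 γ (ψ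 t) + iteratedDeriv 1 ψ t ^ 5 • iteratedDeriv 5 γ (ψ t) := by
    intro t ht
    rw [iteratedDeriv_succ]
    have hev : iteratedDeriv 4 (γ ∘ ψ) =ᶠ[𝓝 t] (fun s => iteratedDeriv 4 ψ s • iteratedDeriv 1 γ (ψ s) + (4 * iteratedDeriv 1 ψ s * iteratedDeriv 3 ψ s + 3 * iteratedDeriv 2 ψ s ^ 2) • iteratedDeriv 2 γ (ψ s) + (6 * iteratedDeriv 1 ψ s ^ 2 * iteratedDeriv 2 ψ s) • iteratedDeriv 3 γ (ψ s) + iteratedDeriv 1 ψ s ^ 4 • iteratedDeriv 4 γ (ψ s)) :=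
      Filter.eventuallyEq_of_mem (hU.mem_nhds ht) E4
    rw [hev.deriv_eq, (key4 t ht).deriv]
  have E6 : ∀ t ∈ U, iteratedDeriv 6 (γ ∘ ψ) t = iteratedDeriv 6 ψ t • iteratedDeriv 1 γ (ψ t) + (6 * iteratedDeriv 1 ψ t * iteratedDeriv 5 ψ t + 15 * iteratedDeriv 2 ψ t * iteratedDeriv 4 ψ t + 10 * iteratedDeriv 3 ψ t ^ 2) • iteratedDeriv 2 γ (ψ t) + (15 * iteratedDeriv 1 ψ t ^ 2 * iteratedDeriv 4 ψ t + 60 * iteratedDeriv 1 ψ t * iteratedDeriv 2 ψ t * iteratedDeriv 3 ψ t + 15 * iteratedDeriv 2 ψ t ^ 3) • iteratedDeriv 3 γ (ψ t) + (20 * iteratedDeriv 1 ψ t ^ 3 * iteratedDeriv 3 ψ t + 45 * iteratedDeriv 1 ψ t ^ 2 * iteratedDeriv 2 ψ t ^ 2) • iteratedDeriv 4 γ (ψ t) + (15 * iteratedDeriv 1 ψ t ^ 4 * iteratedDeriv 2 ψ t) • iteratedDeriv 5 γ (ψ t) + iteratedDeriv 1 ψ t ^ 6 • iteratedDeriv 6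 γ (ψ t) := by
    intro t ht
    rw [iteratedDeriv_succ]
    have hev : iteratedDeriv 5 (γ ∘ ψ) =ᶠ[𝓝 t] (fun s => iteratedDeriv 5 ψ s • iteratedDeriv 1 γ (ψ s) + (5 * iteratedDeriv 1 ψ s * iteratedDeriv 4 ψ s + 10 * iteratedDeriv 2 ψ s * iteratedDeriv 3 ψ s) • iteratedDeriv 2 γ (ψ s) + (10 * iteratedDeriv 1 ψ s ^ 2 * iteratedDeriv 3 ψ s + 15 * iteratedDeriv 1 ψ s * iteratedDeriv 2 ψ s ^ 2) • iteratedDeriv 3 γ (ψ s) + (10 * iteratedDeriv 1 ψ s ^ 3 * iteratedDeriv 2 ψ s) • iteratedDeriv 4 γ (ψ s) + iteratedDeriv 1 ψ s ^ 5 • iteratedDeriv 5 γ (ψ s)) :=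
      Filter.eventuallyEq_of_mem (hU.mem_nhds ht) E5
    rw [hev.deriv_eq, (key5 t ht).deriv]
  have E7 : ∀ t ∈ U, iteratedDeriv 7 (γ ∘ ψ) t = iteratedDeriv 7 ψ t • iteratedDeriv 1 γ (ψ t) + (7 * iteratedDeriv 1 ψ t * iteratedDeriv 6 ψ t + 21 * iteratedDeriv 2 ψ t * iteratedDeriv 5 ψ t + 35 * iteratedDeriv 3 ψ t * iteratedDeriv 4 ψ t) • iteratedDeriv 2 γ (ψ t) + (21 * iteratedDeriv 1 ψ t ^ 2 * iteratedDeriv 5 ψ t + 105 * iteratedDeriv 1 ψ t * iteratedDeriv 2 ψ t * iteratedDeriv 4 ψ t + 70 * iteratedDeriv 1 ψ t * iteratedDeriv 3 ψ t ^ 2 + 105 * iteratedDeriv 2 ψ t ^ 2 * iteratedDeriv 3 ψ t) • iteratedDeriv 3 γ (ψ t) + (35 * iteratedDeriv 1 ψ t ^ 3 * iteratedDeriv 4 ψ t + 210 * iteratedDeriv 1 ψ t ^ 2 * iteratedDeriv 2 ψ t * iteratedDeriv 3 ψ t + 105 * iteratedDeriv 1 ψ t * iteratedDeriv 2 ψ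 t ^ 3) • iteratedDeriv 4 γ (ψ t) + (35 * iteratedDeriv 1 ψ t ^ 4 * iteratedDeriv 3 ψ t + 105 * iteratedDeriv 1 ψ t ^ 3 * iteratedDeriv 2 ψ t ^ 2) • iteratedDeriv 5 γ (ψ t) + (21 * iteratedDeriv 1 ψ t ^ 5 * iteratedDeriv 2 ψ t) • iteratedDeriv 6 γ (ψ t) + iteratedDeriv 1 ψ t ^ 7 • iteratedDeriv 7 γ (ψ t) := by
    intro t ht
    rw [iteratedDeriv_succ]
    have hev : iteratedDeriv 6 (γ ∘ ψ) =ᶠ[𝓝 t] (fun s => iteratedDeriv 6 ψ s • iteratedDeriv 1 γ (ψ s) + (6 * iteratedDeriv 1 ψ s * iteratedDeriv 5 ψ s + 15 * iteratedDeriv 2 ψ s * iteratedDeriv 4 ψ s + 10 * iteratedDeriv 3 ψ s ^ 2) • iteratedDeriv 2 γ (ψ s) + (15 * iteratedDeriv 1 ψ s ^ 2 * iteratedDeriv 4 ψ s + 60 * iteratedDeriv 1 ψ s * iteratedDeriv 2 ψ s * iteratedDeriv 3 ψ s + 15 * iteratedDeriv 2 ψ s ^ 3) • iteratedDeriv 3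 γ (ψ s) + (20 * iteratedDeriv 1 ψ s ^ 3 * iteratedDeriv 3 ψ s + 45 * iteratedDeriv 1 ψ s ^ 2 * iteratedDeriv 2 ψ s ^ 2) • iteratedDeriv 4 γ (ψ s) + (15 * iteratedDeriv 1 ψ s ^ 4 * iteratedDeriv 2 ψ s) • iteratedDeriv 5 γ (ψ s) + iteratedDeriv 1 ψ s ^ 6 • iteratedDeriv 6 γ (ψ s)) :=
      Filter.eventuallyEq_of_mem (hU.mem_nhds ht) E6
    rw [hev.deriv_eq, (key6 t ht).deriv]
  intro t ht
  exact ⟨E4 t ht, E5 t ht, E6 t ht, E7 t ht⟩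

lemma stmt9_part1 (ψ ψinv : ℝ → ℝ) (I : Set ℝ) (hI : IsOpen I) (hI0 : (0 : ℝ) ∈ I)
    (γ : ℝ → ℝ × ℝ) (hγ : ContDiffOn ℝ ∞ γ I)
    (h1 : iteratedDeriv 1 γ 0 = 0) (h2 : iteratedDeriv 2 γ 0 = 0)
    (h3 : iteratedDeriv 3 γ 0 = 0) (h4 : iteratedDeriv 4 γ 0 ≠ 0)
    (hd : IsDiffeoGermAt0 ∞ ψ ψinv) : kappaQ (γ ∘ ψ) = kappaQ γ := by
  obtain ⟨hψ0, hinv0, hcψ, hcinv, hli, _⟩ := hd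
  -- q1 ≠ 0
  have hdψ : DifferentiableAt ℝ ψ 0 := hcψ.differentiableAt (by simp)
  have hdinv : DifferentiableAt ℝ ψinv 0 := hcinv.differentiableAt (by simp)
  have hq1 : deriv ψ 0 ≠ 0 := by
    have hcomp : deriv (fun x => ψinv (ψ x)) 0 = deriv ψinv (ψ 0) * deriv ψ 0 :=
      deriv_comp 0 (by rwa [hψ0]) hdψ
    have hid : deriv (fun x => ψinv (ψ x)) 0 = 1 := by
      rw [Filter.EventuallyEq.deriv_eq (f := id) hli, deriv_id]
    intro h
    rw [hid, h, mul_zero] at hcomp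
    exact one_ne_zero hcomp
  -- construct U
  have h8 : ContDiffAt ℝ 8 ψ 0 := hcψ.of_le (le_of_eq_of_le (by norm_cast) (WithTop.coe_le_coe.2 (le_top (a := (8:ℕ∞)))))
  obtain ⟨u, hu_nhds, hcdu⟩ := h8.contDiffOn le_rfl (by simp)
  have hU₁o : IsOpen (interior u) := isOpen_interior
  have h0U₁ : (0 : ℝ) ∈ interior u := mem_interior_iff_mem_nhds.2 hu_nhds
  have hcd1 : ContDiffOn ℝ 8 ψ (interior u) := hcdu.mono interior_subset
  set U : Set ℝ := interior u ∩ ψ ⁻¹' I with hUdef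
  have hUo : IsOpen U := (hcd1.continuousOn).isOpen_inter_preimage hU₁o hI
  have h0U : (0 : ℝ) ∈ U := ⟨h0U₁, by simpa [hψ0] using hI0⟩
  have hcdU : ContDiffOn ℝ 8 ψ U := hcd1.mono Set.inter_subset_left
  have hu : ∀ t ∈ U, ∀ k, k ≤ 6 → HasDerivAt (iteratedDeriv k ψ) (iteratedDeriv (k+1) ψ t) t := by
    intro t ht k hk
    exact hasDerivAt_iteratedDeriv_of_contDiffOn hcdU hUo ht (by exact_mod_cast (by omega : k < 8) : ((k:ℕ) : WithTop ℕ∞) < 8)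
  have hg : ∀ t ∈ U, ∀ k, k ≤ 6 → HasDerivAt (iteratedDeriv k γ) (iteratedDeriv (k+1) γ (ψ t)) (ψ t) := by
    intro t ht k _
    exact hasDerivAt_iteratedDeriv_of_contDiffOn hγ hI ht.2
      (by exact_mod_cast WithTop.coe_lt_coe.2 (WithTop.coe_lt_top k) : ((k:ℕ) : WithTop ℕ∞) < ∞)
  obtain ⟨e4, e5, e6, e7⟩ := faa7 ψ γ U hUo hu hg 0 h0U
  rw [hψ0, h1, h2, h3] at e4 e5 e6 e7
  simp only [smul_zero, zero_add, add_zero] at e4 e5 e6 e7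
  have hq1' : iteratedDeriv 1 ψ 0 ≠ 0 := by rwa [iteratedDeriv_one]
  have hcusp : cuspInv45 (γ ∘ ψ) = iteratedDeriv 1 ψ 0 ^ 20 * cuspInv45 γ := by
    simp only [cuspInv45, Adet, Bdet, Cdet, Ddet, det2, e4, e5, e6, e7,
      Prod.smul_fst, Prod.smul_snd, Prod.fst_add, Prod.snd_add, smul_eq_mul]
    ring
  have hn : norm2 (iteratedDeriv 4 (γ ∘ ψ) 0)
      = iteratedDeriv 1 ψ 0 ^ 4 * norm2 (iteratedDeriv 4 γ 0) := by
    rw [e4]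
    simp only [norm2, Prod.smul_fst, Prod.smul_snd, smul_eq_mul]
    rw [show (iteratedDeriv 1 ψ 0 ^ 4 * (iteratedDeriv 4 γ 0).1) ^ 2 +
        (iteratedDeriv 1 ψ 0 ^ 4 * (iteratedDeriv 4 γ 0).2) ^ 2 =
        (iteratedDeriv 1 ψ 0 ^ 4) ^ 2 * ((iteratedDeriv 4 γ 0).1 ^ 2 + (iteratedDeriv 4 γ 0).2 ^ 2)
      from by ring, Real.sqrt_mul (sq_nonneg _), Real.sqrt_sq (by positivity)]
  rw [kappaQ, kappaQ, hcusp, hn, mul_pow,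
    show (iteratedDeriv 1 ψ 0 ^ 4) ^ 5 = iteratedDeriv 1 ψ 0 ^ 20 from by ring,
    mul_div_mul_left _ _ (pow_ne_zero 20 hq1')]

lemma stmt9_part2 (I : Set ℝ) (hI : IsOpen I) (hI0 : (0 : ℝ) ∈ I)
    (γ : ℝ → ℝ × ℝ) (hγ : ContDiffOn ℝ ∞ γ I)
    (Q : Matrix (Fin 2) (Fin 2) ℝ) (hQ : Q.transpose * Q = 1) (c : ℝ × ℝ) :
    kappaQ (fun t =>
        (Q 0 0 * (γ t).1 + Q 0 1 * (γ t).2 + c.1,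
         Q 1 0 * (γ t).1 + Q 1 1 * (γ t).2 + c.2)) = kappaQ γ := by
  set Φγ : ℝ → ℝ × ℝ := fun t =>
      (Q 0 0 * (γ t).1 + Q 0 1 * (γ t).2 + c.1,
       Q 1 0 * (γ t).1 + Q 1 1 * (γ t).2 + c.2) with hΦγ
  have hγd : ∀ n : ℕ, ∀ t ∈ I, HasDerivAt (iteratedDeriv n γ) (iteratedDeriv (n+1) γ t) t := by
    intro n t ht
    exact hasDerivAt_iteratedDeriv_of_contDiffOn hγ hI ht
      (by exact_mod_cast WithTop.coe_lt_coe.2 (WithTop.coe_lt_top n) : ((n:ℕ) : WithTop ℕ∞) < ∞)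
  -- component HasDerivAt
  have hcomp : ∀ n : ℕ, ∀ t ∈ I,
      HasDerivAt (fun s => (iteratedDeriv n γ s).1) (iteratedDeriv (n+1) γ t).1 t ∧
      HasDerivAt (fun s => (iteratedDeriv n γ s).2) (iteratedDeriv (n+1) γ t).2 t := by
    intro n t ht
    have h := hγd n t ht
    constructor
    · exact hasFDerivAt_fst.comp_hasDerivAt t h
    · exact hasFDerivAt_snd.comp_hasDerivAt t h
  have key : ∀ n : ℕ, ∀ t ∈ I, iteratedDeriv (n+1) Φγ t =
      (Q 0 0 * (iteratedDeriv (n+1) γ t).1 + Q 0 1 * (iteratedDeriv (n+1) γ t).2,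
       Q 1 0 * (iteratedDeriv (n+1) γ t).1 + Q 1 1 * (iteratedDeriv (n+1) γ t).2) := by
    intro n
    induction n with
    | zero =>
      intro t ht
      obtain ⟨hx, hy⟩ := hcomp 0 t ht
      simp only [iteratedDeriv_zero] at hx hy
      have hd : HasDerivAt Φγ
          (Q 0 0 * (iteratedDeriv 1 γ t).1 + Q 0 1 * (iteratedDeriv 1 γ t).2,
           Q 1 0 * (iteratedDeriv 1 γ t).1 + Q 1 1 * (iteratedDeriv 1 γ t).2) t :=
        (((hx.const_mul (Q 0 0)).add (hy.const_mul (Q 0 1))).add_const c.1).prodMk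
          (((hx.const_mul (Q 1 0)).add (hy.const_mul (Q 1 1))).add_const c.2)
      rw [iteratedDeriv_one]
      exact hd.deriv
    | succ n ih =>
      intro t ht
      rw [iteratedDeriv_succ]
      have hev : iteratedDeriv (n+1) Φγ =ᶠ[𝓝 t] (fun s =>
          (Q 0 0 * (iteratedDeriv (n+1) γ s).1 + Q 0 1 * (iteratedDeriv (n+1) γ s).2,
           Q 1 0 * (iteratedDeriv (n+1) γ s).1 + Q 1 1 * (iteratedDeriv (n+1) γ s).2)) :=
        Filter.eventuallyEq_of_mem (hI.mem_nhds ht) ih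
      rw [hev.deriv_eq]
      obtain ⟨hx, hy⟩ := hcomp (n+1) t ht
      have hd : HasDerivAt (fun s =>
          (Q 0 0 * (iteratedDeriv (n+1) γ s).1 + Q 0 1 * (iteratedDeriv (n+1) γ s).2,
           Q 1 0 * (iteratedDeriv (n+1) γ s).1 + Q 1 1 * (iteratedDeriv (n+1) γ s).2))
          (Q 0 0 * (iteratedDeriv (n+2) γ t).1 + Q 0 1 * (iteratedDeriv (n+2) γ t).2,
           Q 1 0 * (iteratedDeriv (n+2) γ t).1 + Q 1 1 * (iteratedDeriv (n+2) γ t).2) t :=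
        (((hx.const_mul (Q 0 0)).add (hy.const_mul (Q 0 1)))).prodMk
          (((hx.const_mul (Q 1 0)).add (hy.const_mul (Q 1 1))))
      exact hd.deriv
  have e4 := key 3 0 hI0
  have e5 := key 4 0 hI0
  have e6 := key 5 0 hI0
  have e7 := key 6 0 hI0
  norm_num at e4 e5 e6 e7
  -- orthogonality relations
  have e00 := congrFun (congrFun hQ 0) 0
  have e01 := congrFun (congrFun hQ 0) 1
  have e11 := congrFun (congrFun hQ 1) 1
  simp only [Matrix.mul_apply, Matrix.transpose_apply, Fin.sum_univ_two,
    Matrix.one_apply_eq, Matrix.one_apply_ne, ne_eq, Fin.ext_iff] at e00 e01 e11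
  norm_num at e00 e01 e11
  have hdetsq : (Q 0 0 * Q 1 1 - Q 0 1 * Q 1 0) ^ 2 = 1 := by
    linear_combination (Q 0 1 ^ 2 + Q 1 1 ^ 2) * e00 + e11 - (Q 0 0 * Q 0 1 + Q 1 0 * Q 1 1) * e01
  have hA : Adet Φγ = (Q 0 0 * Q 1 1 - Q 0 1 * Q 1 0) * Adet γ := by
    simp only [Adet, det2, e4, e5]; ring
  have hB : Bdet Φγ = (Q 0 0 * Q 1 1 - Q 0 1 * Q 1 0) * Bdet γ := by
    simp only [Bdet, det2, e4, e6]; ring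
  have hC : Cdet Φγ = (Q 0 0 * Q 1 1 - Q 0 1 * Q 1 0) * Cdet γ := by
    simp only [Cdet, det2, e4, e7]; ring
  have hD : Ddet Φγ = (Q 0 0 * Q 1 1 - Q 0 1 * Q 1 0) * Ddet γ := by
    simp only [Ddet, det2, e5, e6]; ring
  have hcusp : cuspInv45 Φγ = cuspInv45 γ := by
    simp only [cuspInv45, hA, hB, hC, hD]
    linear_combination (-77 * Bdet γ ^ 2 + 105 * Adet γ * Ddet γ + 60 * Adet γ * Cdet γ) * hdetsq
  have hn : norm2 (iteratedDeriv 4 Φγ 0) = norm2 (iteratedDeriv 4 γ 0) := by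
    rw [e4]
    simp only [norm2]
    congr 1
    linear_combination (iteratedDeriv 4 γ 0).1 ^ 2 * e00 +
      2 * (iteratedDeriv 4 γ 0).1 * (iteratedDeriv 4 γ 0).2 * e01 +
      (iteratedDeriv 4 γ 0).2 ^ 2 * e11
  rw [kappaQ, kappaQ, hcusp, hn]

/-- The `(4,5;±7)`-cuspidal curvature `κ_q` is invariant under
parameter transformations of the source and congruent transformations of the
target. -/
theorem stmt_9 (I : Set ℝ) (hI : IsOpen I) (hI0 : (0 : ℝ) ∈ I)
    (γ : ℝ → ℝ × ℝ) (hγ : ContDiffOn ℝ ∞ γ I)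
    (h1 : iteratedDeriv 1 γ 0 = 0) (h2 : iteratedDeriv 2 γ 0 = 0)
    (h3 : iteratedDeriv 3 γ 0 = 0) (h4 : iteratedDeriv 4 γ 0 ≠ 0) :
    (∀ ψ ψinv : ℝ → ℝ, IsDiffeoGermAt0 ∞ ψ ψinv → kappaQ (γ ∘ ψ) = kappaQ γ) ∧
    (∀ Q : Matrix (Fin 2) (Fin 2) ℝ, Q.transpose * Q = 1 → ∀ c : ℝ × ℝ,
      kappaQ (fun t =>
        (Q 0 0 * (γ t).1 + Q 0 1 * (γ t).2 + c.1,
         Q 1 0 * (γ t).1 + Q 1 1 * (γ t).2 + c.2)) = kappaQ γ) := by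
  constructor
  · intro ψ ψinv hd
    exact stmt9_part1 ψ ψinv I hI hI0 γ hγ h1 h2 h3 h4 hd
  · intro Q hQ c
    exact stmt9_part2 I hI hI0 γ hγ Q hQ c
end

section
/- The curves Cusp_{(4,5)}(t) = (t⁴, t⁵), Cusp_{(4,5;+7)}(t) = (t⁴, t⁵ + t⁷) and Cusp_{(4,5;−7)}(t) = (t⁴, t⁵ − t⁷) are pairwise not 𝒜-equivalent at t = 0. -/
open Filter Topology
open scoped ContDiff

section AuxLemmas

open Asymptotics Set Metric

lemma natCast_le_infty (n : ℕ) : (n : WithTop ℕ∞) ≤ ∞ := by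
  exact_mod_cast (le_top : (n : ℕ∞) ≤ ⊤)

/-- `t^n = O(t^m)` near `0` for `m ≤ n`. -/
lemma pow_isBigO_pow {m n : ℕ} (h : m ≤ n) :
    (fun t : ℝ => t ^ n) =O[𝓝 (0:ℝ)] fun t => t ^ m := by
  rw [isBigO_iff]
  refine ⟨1, ?_⟩
  have h1 : ∀ᶠ t : ℝ in 𝓝 0, |t| ≤ 1 := by
    have := Metric.closedBall_mem_nhds (0:ℝ) one_pos
    filter_upwards [this] with t ht
    simpa [Real.dist_eq] using ht
  filter_upwards [h1] with t ht
  simp only [Real.norm_eq_abs, abs_pow, one_mul]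
  exact pow_le_pow_of_le_one (abs_nonneg t) ht h

lemma Asymptotics.IsBigO.pow_weaken {f : ℝ → ℝ} {m n : ℕ} (hf : f =O[𝓝 (0:ℝ)] fun t => t ^ n)
    (h : m ≤ n) : f =O[𝓝 (0:ℝ)] fun t => t ^ m :=
  hf.trans (pow_isBigO_pow h)

lemma Asymptotics.IsBigO.mul_pow {f g : ℝ → ℝ} {m n : ℕ} (hf : f =O[𝓝 (0:ℝ)] fun t => t ^ m)
    (hg : g =O[𝓝 (0:ℝ)] fun t => t ^ n) :
    (fun t => f t * g t) =O[𝓝 (0:ℝ)] fun t => t ^ (m + n) :=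
  (hf.mul hg).congr (fun _ => rfl) (fun t => (pow_add t m n).symm)

/-- If a polynomial is `O(t^n)` at `0` then its coefficients below degree `n` vanish. -/
lemma poly_coeff_zero : ∀ (n : ℕ) (a : ℕ → ℝ),
    ((fun t : ℝ => ∑ k ∈ Finset.range n, a k * t ^ k) =O[𝓝[≠] (0:ℝ)] fun t => t ^ n) →
    ∀ k < n, a k = 0 := by
  intro n
  induction n with
  | zero => intro a _ k hk; omega
  | succ n ih =>
    intro a h
    have hcont : ContinuousAt (fun t : ℝ => ∑ k ∈ Finset.range (n+1), a k * t ^ k) 0 := by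
      apply Continuous.continuousAt
      exact continuous_finset_sum _ fun k _ => by fun_prop
    have hval : ∑ k ∈ Finset.range (n+1), a k * (0:ℝ) ^ k = a 0 := by
      rw [Finset.sum_range_succ']
      simp
    have t1 : Tendsto (fun t : ℝ => ∑ k ∈ Finset.range (n+1), a k * t ^ k) (𝓝[≠] 0) (𝓝 (a 0)) := by
      have := hcont.tendsto.mono_left (nhdsWithin_le_nhds (s := {(0:ℝ)}ᶜ))
      rwa [hval] at this
    have t2 : Tendsto (fun t : ℝ => ∑ k ∈ Finset.range (n+1), a k * t ^ k) (𝓝[≠] 0) (𝓝 0) := by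
      apply h.trans_tendsto
      have : Tendsto (fun t : ℝ => t ^ (n+1)) (𝓝 0) (𝓝 0) := by
        have : Continuous (fun t : ℝ => t ^ (n+1)) := by fun_prop
        simpa using this.tendsto 0
      exact this.mono_left (nhdsWithin_le_nhds)
    have h0 : a 0 = 0 := tendsto_nhds_unique t1 t2
    have hsum : ∀ t : ℝ, ∑ k ∈ Finset.range (n+1), a k * t ^ k
        = t * ∑ k ∈ Finset.range n, a (k+1) * t ^ k := by
      intro t
      rw [Finset.sum_range_succ', Finset.mul_sum, h0]
      simp only [zero_mul, pow_zero, mul_one, add_zero]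
      exact Finset.sum_congr rfl fun k _ => by ring
    have h2 : (fun t : ℝ => ∑ k ∈ Finset.range n, a (k+1) * t ^ k) =O[𝓝[≠] (0:ℝ)]
        fun t => t ^ n := by
      rw [isBigO_iff] at h ⊢
      obtain ⟨C, hC⟩ := h
      refine ⟨C, ?_⟩
      filter_upwards [hC, self_mem_nhdsWithin] with t ht ht0
      have ht0 : t ∈ ({(0:ℝ)}ᶜ : Set ℝ) := ht0
      have htne : t ≠ 0 := ht0
      have habs : (0:ℝ) < |t| := abs_pos.mpr htne
      rw [hsum t, pow_succ'] at ht
      simp only [Real.norm_eq_abs, abs_mul] at ht ⊢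
      have ht' : |t| * |∑ k ∈ Finset.range n, a (k+1) * t ^ k| ≤ |t| * (C * |t ^ n|) := by
        calc |t| * |∑ k ∈ Finset.range n, a (k+1) * t ^ k| ≤ C * (|t| * |t ^ n|) := ht
          _ = |t| * (C * |t ^ n|) := by ring
      exact (mul_le_mul_iff_right₀ habs).mp ht'
    intro k hk
    match k with
    | 0 => exact h0
    | k + 1 => exact ih _ h2 k (by omega)

/-- Mean value trick: if `f 0 = 0` and `f' = O(t^n)` near `0`, then `f = O(t^(n+1))`. -/
lemma bigO_of_deriv_bigO {f g : ℝ → ℝ} {n : ℕ} (hf0 : f 0 = 0)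
    (hd : ∀ᶠ t in 𝓝 (0:ℝ), HasDerivAt f (g t) t)
    (hg : g =O[𝓝 (0:ℝ)] fun t => t ^ n) :
    f =O[𝓝 (0:ℝ)] fun t => t ^ (n+1) := by
  obtain ⟨C, hC0, hCb⟩ := hg.exists_nonneg
  have hCb' : ∀ᶠ t in 𝓝 (0:ℝ), ‖g t‖ ≤ C * ‖t ^ n‖ := hCb.bound
  obtain ⟨δ, hδ, hδball⟩ := Metric.eventually_nhds_iff.mp (hd.and hCb')
  rw [isBigO_iff]
  refine ⟨C, Metric.eventually_nhds_iff.mpr ⟨δ, hδ, ?_⟩⟩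
  intro t ht
  rw [Real.dist_eq, sub_zero] at ht
  have habs : ∀ x ∈ uIcc (0:ℝ) t, |x| ≤ |t| := by
    intro x hx
    rcases Set.mem_uIcc.mp hx with ⟨h1, h2⟩ | ⟨h1, h2⟩ <;>
    · have := le_abs_self t
      have := neg_abs_le t
      exact abs_le.mpr ⟨by linarith, by linarith⟩
  have hmem : ∀ x ∈ uIcc (0:ℝ) t, dist x 0 < δ := by
    intro x hx
    rw [Real.dist_eq, sub_zero]
    exact lt_of_le_of_lt (habs x hx) ht
  have mvt : ‖f t - f 0‖ ≤ (C * |t| ^ n) * ‖t - 0‖ := by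
    apply Convex.norm_image_sub_le_of_norm_hasDerivWithin_le
      (f' := g) (fun x hx => (hδball (hmem x hx)).1.hasDerivWithinAt) ?_ (convex_uIcc _ _)
      left_mem_uIcc right_mem_uIcc
    intro x hx
    calc ‖g x‖ ≤ C * ‖x ^ n‖ := (hδball (hmem x hx)).2
      _ = C * |x| ^ n := by rw [Real.norm_eq_abs, abs_pow]
      _ ≤ C * |t| ^ n := by
          apply mul_le_mul_of_nonneg_left _ hC0
          exact pow_le_pow_left₀ (abs_nonneg x) (habs x hx) n
  rw [hf0, sub_zero, sub_zero] at mvt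
  calc ‖f t‖ ≤ (C * |t| ^ n) * ‖t‖ := mvt
    _ = C * ‖t ^ (n+1)‖ := by
        rw [Real.norm_eq_abs, Real.norm_eq_abs, abs_pow, pow_succ]
        ring

lemma natCast_ne_infty (m : ℕ) : (m : WithTop ℕ∞) ≠ ∞ := by
  exact_mod_cast (by simp : ((m:ℕ):ℕ∞) ≠ ⊤)


/-- Peano-type Taylor expansion with big-O remainder for `C^(n+1)` functions. -/
lemma taylor_exists : ∀ (n : ℕ) (f : ℝ → ℝ), ContDiffAt ℝ (n+1 : ℕ) f 0 →
    ∃ a : ℕ → ℝ, a 0 = f 0 ∧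
      (fun t => f t - ∑ k ∈ Finset.range (n+1), a k * t ^ k) =O[𝓝 (0:ℝ)]
        fun t => t ^ (n+1) := by
  intro n
  induction n with
  | zero =>
    intro f hf
    refine ⟨fun _ => f 0, rfl, ?_⟩
    have hdiff : DifferentiableAt ℝ f 0 := hf.differentiableAt (by simp)
    have := hdiff.isBigO_sub
    simp only [sub_zero] at this
    apply this.congr (fun t => by simp) (fun t => (pow_one t).symm)
  | succ n ih =>
    intro f hf
    -- a neighborhood on which f is C^{n+2}
    have hf' : ContDiffWithinAt ℝ ((n+2:ℕ) : WithTop ℕ∞) f Set.univ 0 := hf.contDiffWithinAt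
    obtain ⟨U, hUo, hU0, hfU'⟩ := hf'.contDiffOn' (le_refl _)
      (fun h => absurd h (by exact_mod_cast natCast_ne_infty (n+2)))
    have hfU : ContDiffOn ℝ ((n+2:ℕ) : WithTop ℕ∞) f U := by simpa using hfU'
    -- derivative data on U
    have hcast : ((n + 2 : ℕ) : WithTop ℕ∞) = ((n + 1 : ℕ) : WithTop ℕ∞) + 1 := by
      push_cast; ring
    have hsplit := (contDiffOn_succ_iff_deriv_of_isOpen (n := ((n+1:ℕ) : WithTop ℕ∞)) hUo).mp
      (by rw [← hcast]; exact_mod_cast hfU)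
    have hdiffU : DifferentiableOn ℝ f U := hsplit.1
    have hderivU : ContDiffOn ℝ (n+1 : ℕ) (deriv f) U := hsplit.2.2
    obtain ⟨b, hb0, hbO⟩ := ih (deriv f) (hderivU.contDiffAt (hUo.mem_nhds hU0))
    classical
    refine ⟨fun k => if k = 0 then f 0 else b (k-1) / k, by simp, ?_⟩
    set a : ℕ → ℝ := fun k => if k = 0 then f 0 else b (k-1) / k with ha
    have hF0 : f 0 - ∑ k ∈ Finset.range (n+2), a k * (0:ℝ) ^ k = 0 := by
      rw [Finset.sum_range_succ']
      simp [ha]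
    have hderiv_poly : ∀ t : ℝ,
        HasDerivAt (fun s => ∑ k ∈ Finset.range (n+2), a k * s ^ k)
          (∑ k ∈ Finset.range (n+1), b k * t ^ k) t := by
      intro t
      have h1 : HasDerivAt (fun s : ℝ => ∑ k ∈ Finset.range (n+2), a k * s ^ k)
          (∑ k ∈ Finset.range (n+2), a k * (k * t ^ (k-1))) t := by
        apply HasDerivAt.fun_sum
        intro k _
        exact (hasDerivAt_pow k t).const_mul (a k)
      have h2 : ∑ k ∈ Finset.range (n+2), a k * (k * t ^ (k-1))
          = ∑ k ∈ Finset.range (n+1), b k * t ^ k := by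
        rw [Finset.sum_range_succ']
        simp only [Nat.cast_zero, zero_mul, mul_zero, add_zero]
        apply Finset.sum_congr rfl
        intro k _
        have : a (k+1) = b k / (k+1) := by simp [ha]
        rw [this]
        have hk : ((k:ℝ) + 1) ≠ 0 := by positivity
        push_cast
        field_simp
      rwa [h2] at h1
    have hd : ∀ᶠ t in 𝓝 (0:ℝ),
        HasDerivAt (fun s => f s - ∑ k ∈ Finset.range (n+2), a k * s ^ k)
          (deriv f t - ∑ k ∈ Finset.range (n+1), b k * t ^ k) t := by
      filter_upwards [hUo.mem_nhds hU0] with t ht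
      have hft : HasDerivAt f (deriv f t) t :=
        ((hdiffU t ht).differentiableAt (hUo.mem_nhds ht)).hasDerivAt
      exact hft.sub (hderiv_poly t)
    exact bigO_of_deriv_bigO hF0 hd hbO

/-- Quadratic Taylor remainder bound for `C²` maps. -/
lemma quad_remainder {E F : Type*} [NormedAddCommGroup E] [NormedSpace ℝ E]
    [NormedAddCommGroup F] [NormedSpace ℝ F]
    {Ψ : E → F} (h : ContDiffAt ℝ 2 Ψ 0) :
    (fun v => Ψ v - Ψ 0 - fderiv ℝ Ψ 0 v) =O[𝓝 (0:E)] fun v => ‖v‖ ^ 2 := by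
  have hfd : ContDiffAt ℝ 1 (fderiv ℝ Ψ) 0 := h.fderiv_right (by norm_num)
  obtain ⟨K, s, hs, hlip⟩ := hfd.exists_lipschitzOnWith
  have hev : ∀ᶠ w in 𝓝 (0:E), ContDiffAt ℝ 2 Ψ w := h.eventually (by
    intro hh
    exact absurd hh (by norm_num))
  obtain ⟨δ, hδ, hball⟩ := Metric.eventually_nhds_iff.mp
    ((hev.and (eventually_mem_nhds_iff.mpr hs)))
  rw [isBigO_iff]
  refine ⟨K, Metric.eventually_nhds_iff.mpr ⟨δ, hδ, ?_⟩⟩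
  intro v hv
  rw [dist_eq_norm, sub_zero] at hv
  set L := fderiv ℝ Ψ 0 with hL
  have hBsub : closedBall (0:E) ‖v‖ ⊆ ball (0:E) δ := by
    intro w hw
    rw [mem_closedBall, dist_eq_norm, sub_zero] at hw
    rw [mem_ball, dist_eq_norm, sub_zero]
    exact lt_of_le_of_lt hw hv
  have hs' : ∀ w ∈ closedBall (0:E) ‖v‖, s ∈ 𝓝 w := by
    intro w hw
    have := hball (by simpa [dist_eq_norm] using hBsub hw)
    exact this.2
  have hdiff : ∀ w ∈ closedBall (0:E) ‖v‖, HasFDerivWithinAt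
      (fun x => Ψ x - L x) (fderiv ℝ Ψ w - L) (closedBall (0:E) ‖v‖) w := by
    intro w hw
    have hΨw : ContDiffAt ℝ 2 Ψ w := (hball (by simpa [dist_eq_norm] using hBsub hw)).1
    have : DifferentiableAt ℝ Ψ w := hΨw.differentiableAt (by norm_num)
    exact (this.hasFDerivAt.sub (L.hasFDerivAt)).hasFDerivWithinAt
  have hbound : ∀ w ∈ closedBall (0:E) ‖v‖, ‖fderiv ℝ Ψ w - L‖ ≤ (K:ℝ) * ‖v‖ := by
    intro w hw
    have hw' : ‖w‖ ≤ ‖v‖ := by simpa [dist_eq_norm] using hw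
    have hws : w ∈ s := mem_of_mem_nhds (hs' w hw)
    have h0s : (0:E) ∈ s := mem_of_mem_nhds hs
    have := hlip.dist_le_mul w hws 0 h0s
    rw [dist_eq_norm, dist_eq_norm, sub_zero] at this
    calc ‖fderiv ℝ Ψ w - L‖ = ‖fderiv ℝ Ψ w - fderiv ℝ Ψ 0‖ := by rw [hL]
      _ ≤ (K:ℝ) * ‖w‖ := this
      _ ≤ (K:ℝ) * ‖v‖ := by
          exact mul_le_mul_of_nonneg_left hw' (K.coe_nonneg)
  have hmem0 : (0:E) ∈ closedBall (0:E) ‖v‖ := by simp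
  have hmemv : v ∈ closedBall (0:E) ‖v‖ := by simp
  have mvt := Convex.norm_image_sub_le_of_norm_hasFDerivWithin_le
    hdiff hbound (convex_closedBall _ _) hmem0 hmemv
  calc ‖Ψ v - Ψ 0 - L v‖ = ‖(Ψ v - L v) - (Ψ 0 - L 0)‖ := by
        rw [map_zero, sub_zero]; congr 1; abel
    _ ≤ (K:ℝ) * ‖v‖ * ‖v - 0‖ := mvt
    _ ≤ K * ‖(‖v‖ ^ 2)‖ := by
        rw [sub_zero]
        simp [pow_two, abs_of_nonneg (norm_nonneg v), mul_assoc]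

set_option maxHeartbeats 2000000 in
set_option maxRecDepth 4000 in
lemma key (ε₁ ε₂ : ℝ) (hε : ∀ c : ℝ, c ≠ 0 → ε₁ ≠ ε₂ * c ^ 2) :
    ¬ CEquivAt0 ∞ (fun t => (t ^ 4, t ^ 5 + ε₁ * t ^ 7))
      (fun t => (t ^ 4, t ^ 5 + ε₂ * t ^ 7)) := by
  rintro ⟨-, -, ψ, ψinv, Ψ, Ψinv, ⟨hψ0, hψinv0, hψsm, hψinvsm, hψid, -⟩,
    ⟨hΨ0, -, hΨsm, -, -, -⟩, heq⟩
  -- Taylor expansion of ψ at 0 to order 4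
  obtain ⟨a, ha0, haO⟩ := taylor_exists 4 ψ (hψsm.of_le (natCast_le_infty 5))
  have ha00 : a 0 = 0 := ha0.trans hψ0
  -- remainder
  have hR : (fun t => ψ t - (a 1*t + a 2*t^2 + a 3*t^3 + a 4*t^4)) =O[𝓝 (0:ℝ)] fun t => t ^ 5 := by
    apply haO.congr (fun t => ?_) (fun _ => rfl)
    simp only [Finset.sum_range_succ, Finset.sum_range_zero]
    rw [ha00]
    ring
  -- ψ = O(t)
  have hq1 : (fun t : ℝ => a 1 + a 2*t + a 3*t^2 + a 4*t^3) =O[𝓝 (0:ℝ)] (fun _ => (1:ℝ)) :=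
    (Continuous.tendsto (by fun_prop) 0).isBigO_one ℝ
  have hP1 : (fun t : ℝ => (a 1*t + a 2*t^2 + a 3*t^3 + a 4*t^4)) =O[𝓝 (0:ℝ)] fun t => t ^ 1 :=
    ((isBigO_refl (fun t : ℝ => t) (𝓝 0)).mul hq1).congr (fun t => by ring) (fun t => by ring)
  have hψ1 : (fun t => ψ t) =O[𝓝 (0:ℝ)] fun t => t ^ 1 :=
    ((hR.pow_weaken (by norm_num)).add hP1).congr (fun t => by ring) (fun _ => rfl)
  -- derivative of ψ at 0 is a 1, and it is nonzero
  have hq2 : (fun t : ℝ => a 2 + a 3*t + a 4*t^2) =O[𝓝 (0:ℝ)] (fun _ => (1:ℝ)) :=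
    (Continuous.tendsto (by fun_prop) 0).isBigO_one ℝ
  have hrest : (fun t : ℝ => a 2*t^2 + a 3*t^3 + a 4*t^4) =O[𝓝 (0:ℝ)] fun t => t ^ 2 :=
    ((isBigO_refl (fun t : ℝ => t^2) (𝓝 0)).mul hq2).congr (fun t => by ring) (fun t => by ring)
  have hψlin : (fun t => ψ t - a 1 * t) =O[𝓝 (0:ℝ)] fun t => t ^ 2 :=
    ((hR.pow_weaken (by norm_num)).add hrest).congr (fun t => by ring) (fun _ => rfl)
  have hd1 : HasDerivAt ψ (a 1) 0 := by
    rw [hasDerivAt_iff_isLittleO]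
    have hfun : (fun t : ℝ => ψ t - ψ 0 - (t - 0) • a 1) = fun t => ψ t - a 1 * t := by
      funext t; rw [hψ0, smul_eq_mul]; ring
    have hgun : (fun t : ℝ => t - 0) = fun t : ℝ => t ^ 1 := by funext t; rw [sub_zero, pow_one]
    rw [hfun, hgun]
    exact hψlin.trans_isLittleO (Asymptotics.isLittleO_pow_pow (by norm_num))
  have ha1 : a 1 ≠ 0 := by
    have hinvd : DifferentiableAt ℝ ψinv 0 :=
      hψinvsm.differentiableAt (by simp)
    have hinv0 : HasDerivAt ψinv (deriv ψinv 0) (ψ 0) := by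
      rw [hψ0]; exact hinvd.hasDerivAt
    have hcompd : HasDerivAt (fun t => ψinv (ψ t)) (deriv ψinv 0 * a 1) 0 :=
      HasDerivAt.comp 0 hinv0 hd1
    have hidd : HasDerivAt (fun t : ℝ => t) (deriv ψinv 0 * a 1) 0 :=
      hcompd.congr_of_eventuallyEq (hψid.mono fun x hx => hx.symm)
    have hone : deriv ψinv 0 * a 1 = 1 := hidd.unique (hasDerivAt_id 0)
    intro h
    rw [h, mul_zero] at hone
    exact zero_ne_one hone
  -- powers of ψ versus powers of the Taylor polynomial
  have hP : ∀ k : ℕ, (fun t : ℝ => (a 1*t + a 2*t^2 + a 3*t^3 + a 4*t^4) ^ k) =O[𝓝 (0:ℝ)] fun t => t ^ k := by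
    intro k
    exact (hP1.pow k).congr (fun _ => rfl) (fun t => by rw [← pow_mul, one_mul])
  have hψk : ∀ k : ℕ, (fun t : ℝ => ψ t ^ k) =O[𝓝 (0:ℝ)] fun t => t ^ k := by
    intro k
    exact (hψ1.pow k).congr (fun _ => rfl) (fun t => by rw [← pow_mul, one_mul])
  have E4 : (fun t => ψ t ^ 4 - (a 1*t + a 2*t^2 + a 3*t^3 + a 4*t^4) ^ 4) =O[𝓝 (0:ℝ)] fun t => t ^ 8 := by
    have hfac : (fun t : ℝ => ψ t^3 + ψ t^2 * (a 1*t + a 2*t^2 + a 3*t^3 + a 4*t^4) + ψ t * (a 1*t + a 2*t^2 + a 3*t^3 + a 4*t^4)^2 + (a 1*t + a 2*t^2 + a 3*t^3 + a 4*t^4)^3)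
        =O[𝓝 (0:ℝ)] fun t => t ^ 3 :=
      ((((hψk 3).add (((hψk 2).mul_pow (hP 1)).congr (fun t => by ring) (fun _ => rfl))).add
        (((hψk 1).mul_pow (hP 2)).congr (fun t => by ring) (fun _ => rfl))).add (hP 3))
    exact (hR.mul_pow hfac).congr (fun t => by ring) (fun _ => rfl)
  have E5 : (fun t => ψ t ^ 5 - (a 1*t + a 2*t^2 + a 3*t^3 + a 4*t^4) ^ 5) =O[𝓝 (0:ℝ)] fun t => t ^ 8 := by
    have hfac : (fun t : ℝ => ψ t^4 + ψ t^3 * (a 1*t + a 2*t^2 + a 3*t^3 + a 4*t^4) + ψ t^2 * (a 1*t + a 2*t^2 + a 3*t^3 + a 4*t^4)^2 + ψ t * (a 1*t + a 2*t^2 + a 3*t^3 + a 4*t^4)^3 + (a 1*t + a 2*t^2 + a 3*t^3 + a 4*t^4)^4)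
        =O[𝓝 (0:ℝ)] fun t => t ^ 4 :=
      (((((hψk 4).add (((hψk 3).mul_pow (hP 1)).congr (fun t => by ring) (fun _ => rfl))).add
        (((hψk 2).mul_pow (hP 2)).congr (fun t => by ring) (fun _ => rfl))).add
        (((hψk 1).mul_pow (hP 3)).congr (fun t => by ring) (fun _ => rfl))).add (hP 4))
    exact ((hR.mul_pow hfac).congr (fun t => by ring) (fun _ => rfl)).pow_weaken (by norm_num)
  have E7 : (fun t => ψ t ^ 7 - (a 1*t + a 2*t^2 + a 3*t^3 + a 4*t^4) ^ 7) =O[𝓝 (0:ℝ)] fun t => t ^ 8 := by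
    have hfac : (fun t : ℝ => ψ t^6 + ψ t^5 * (a 1*t + a 2*t^2 + a 3*t^3 + a 4*t^4) + ψ t^4 * (a 1*t + a 2*t^2 + a 3*t^3 + a 4*t^4)^2 + ψ t^3 * (a 1*t + a 2*t^2 + a 3*t^3 + a 4*t^4)^3
        + ψ t^2 * (a 1*t + a 2*t^2 + a 3*t^3 + a 4*t^4)^4 + ψ t * (a 1*t + a 2*t^2 + a 3*t^3 + a 4*t^4)^5 + (a 1*t + a 2*t^2 + a 3*t^3 + a 4*t^4)^6) =O[𝓝 (0:ℝ)] fun t => t ^ 6 :=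
      ((((((hψk 6).add (((hψk 5).mul_pow (hP 1)).congr (fun t => by ring) (fun _ => rfl))).add
        (((hψk 4).mul_pow (hP 2)).congr (fun t => by ring) (fun _ => rfl))).add
        (((hψk 3).mul_pow (hP 3)).congr (fun t => by ring) (fun _ => rfl))).add
        (((hψk 2).mul_pow (hP 4)).congr (fun t => by ring) (fun _ => rfl))).add
        (((hψk 1).mul_pow (hP 5)).congr (fun t => by ring) (fun _ => rfl))).add (hP 6)
    exact ((hR.mul_pow hfac).congr (fun t => by ring) (fun _ => rfl)).pow_weaken (by norm_num)
  -- truncations of powers of the Taylor polynomial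
  have Htr4 : (fun t : ℝ => (a 1*t + a 2*t^2 + a 3*t^3 + a 4*t^4) ^ 4 - (a 1^4*t^4 + 4*a 1^3*a 2*t^5 + (6*a 1^2*a 2^2 + 4*a 1^3*a 3)*t^6 + (4*a 1*a 2^3 + 12*a 1^2*a 2*a 3 + 4*a 1^3*a 4)*t^7)) =O[𝓝 (0:ℝ)] fun t => t ^ 8 := by
    have hQ : (fun t : ℝ => (1*a 2^4 + 12*a 1*a 2^2*a 3 + 6*a 1^2*a 3^2 + 12*a 1^2*a 2*a 4 + 4*a 2^3*a 3*t + 12*a 1*a 2*a 3^2*t + 12*a 1*a 2^2*a 4*t + 12*a 1^2*a 3*a 4*t + 6*a 2^2*a 3^2*t^2 + 4*a 2^3*a 4*t^2 + 4*a 1*a 3^3*t^2 + 24*a 1*a 2*a 3*a 4*t^2 + 6*a 1^2*a 4^2*t^2 + 4*a 2*a 3^3*t^3 + 12*a 2^2*a 3*a 4*t^3 + 12*a 1*a 3^2*a 4*t^3 + 12*a 1*a 2*a 4^2*t^3 + 1*a 3^4*t^4 + 12*a 2*a 3^2*a 4*t^4 + 6*a 2^2*a 4^2*t^4 + 12*a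 1*a 3*a 4^2*t^4 + 4*a 3^3*a 4*t^5 + 12*a 2*a 3*a 4^2*t^5 + 4*a 1*a 4^3*t^5 + 6*a 3^2*a 4^2*t^6 + 4*a 2*a 4^3*t^6 + 4*a 3*a 4^3*t^7 + 1*a 4^4*t^8)) =O[𝓝 (0:ℝ)] (fun _ => (1:ℝ)) :=
      (Continuous.tendsto (by fun_prop) 0).isBigO_one ℝ
    exact ((isBigO_refl (fun t : ℝ => t^8) (𝓝 0)).mul hQ).congr (fun t => by ring) (fun t => by ring)
  have Htr5 : (fun t : ℝ => (a 1*t + a 2*t^2 + a 3*t^3 + a 4*t^4) ^ 5 - (a 1^5*t^5 + 5*a 1^4*a 2*t^6 + (10*a 1^3*a 2^2 + 5*a 1^4*a 3)*t^7)) =O[𝓝 (0:ℝ)] fun t => t ^ 8 := by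
    have hQ : (fun t : ℝ => (10*a 1^2*a 2^3 + 20*a 1^3*a 2*a 3 + 5*a 1^4*a 4 + 5*a 1*a 2^4*t + 30*a 1^2*a 2^2*a 3*t + 10*a 1^3*a 3^2*t + 20*a 1^3*a 2*a 4*t + 1*a 2^5*t^2 + 20*a 1*a 2^3*a 3*t^2 + 30*a 1^2*a 2*a 3^2*t^2 + 30*a 1^2*a 2^2*a 4*t^2 + 20*a 1^3*a 3*a 4*t^2 + 5*a 2^4*a 3*t^3 + 30*a 1*a 2^2*a 3^2*t^3 + 20*a 1*a 2^3*a 4*t^3 + 10*a 1^2*a 3^3*t^3 + 60*a 1^2*a 2*a 3*a 4*t^3 + 10*a 1^3*a 4^2*t^3 + 10*a 2^3*a 3^2*t^4 + 5*a 2^4*a 4*t^4 + 20*a 1*a 2*a 3^3*t^4 + 60*a 1*a 2^2*a 3*a 4*t^4 + 30*a 1^2*a 3^2*a 4*t^4 + 30*a 1^2*a 2*a 4^2*t^4 + 10*a 2^2*a 3^3*t^5 + 20*a 2^3*a 3*a 4*t^5 + 5*a 1*a 3^4*t^5 + 60*a 1*a 2*a 3^2*a 4*t^5 + 30*a 1*a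 2^2*a 4^2*t^5 + 30*a 1^2*a 3*a 4^2*t^5 + 5*a 2*a 3^4*t^6 + 30*a 2^2*a 3^2*a 4*t^6 + 10*a 2^3*a 4^2*t^6 + 20*a 1*a 3^3*a 4*t^6 + 60*a 1*a 2*a 3*a 4^2*t^6 + 10*a 1^2*a 4^3*t^6 + 1*a 3^5*t^7 + 20*a 2*a 3^3*a 4*t^7 + 30*a 2^2*a 3*a 4^2*t^7 + 30*a 1*a 3^2*a 4^2*t^7 + 20*a 1*a 2*a 4^3*t^7 + 5*a 3^4*a 4*t^8 + 30*a 2*a 3^2*a 4^2*t^8 + 10*a 2^2*a 4^3*t^8 + 20*a 1*a 3*a 4^3*t^8 + 10*a 3^3*a 4^2*t^9 + 20*a 2*a 3*a 4^3*t^9 + 5*a 1*a 4^4*t^9 + 10*a 3^2*a 4^3*t^10 + 5*a 2*a 4^4*t^10 + 5*a 3*a 4^4*t^11 + 1*a 4^5*t^12)) =O[𝓝 (0:ℝ)] (fun _ => (1:ℝ)) :=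
      (Continuous.tendsto (by fun_prop) 0).isBigO_one ℝ
    exact ((isBigO_refl (fun t : ℝ => t^8) (𝓝 0)).mul hQ).congr (fun t => by ring) (fun t => by ring)
  have Htr7 : (fun t : ℝ => (a 1*t + a 2*t^2 + a 3*t^3 + a 4*t^4) ^ 7 - (a 1^7*t^7)) =O[𝓝 (0:ℝ)] fun t => t ^ 8 := by
    have hQ : (fun t : ℝ => (7*a 1^6*a 2 + 21*a 1^5*a 2^2*t + 7*a 1^6*a 3*t + 35*a 1^4*a 2^3*t^2 + 42*a 1^5*a 2*a 3*t^2 + 7*a 1^6*a 4*t^2 + 35*a 1^3*a 2^4*t^3 + 105*a 1^4*a 2^2*a 3*t^3 + 21*a 1^5*a 3^2*t^3 + 42*a 1^5*a 2*a 4*t^3 + 21*a 1^2*a 2^5*t^4 + 140*a 1^3*a 2^3*a 3*t^4 + 105*a 1^4*a 2*a 3^2*t^4 + 105*a 1^4*a 2^2*a 4*t^4 + 42*a 1^5*a 3*a 4*t^4 + 7*a 1*a 2^6*t^5 + 105*a 1^2*a 2^4*a 3*t^5 + 210*a 1^3*a 2^2*a 3^2*t^5 + 140*a 1^3*a 2^3*a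 4*t^5 + 35*a 1^4*a 3^3*t^5 + 210*a 1^4*a 2*a 3*a 4*t^5 + 21*a 1^5*a 4^2*t^5 + 1*a 2^7*t^6 + 42*a 1*a 2^5*a 3*t^6 + 210*a 1^2*a 2^3*a 3^2*t^6 + 105*a 1^2*a 2^4*a 4*t^6 + 140*a 1^3*a 2*a 3^3*t^6 + 420*a 1^3*a 2^2*a 3*a 4*t^6 + 105*a 1^4*a 3^2*a 4*t^6 + 105*a 1^4*a 2*a 4^2*t^6 + 7*a 2^6*a 3*t^7 + 105*a 1*a 2^4*a 3^2*t^7 + 42*a 1*a 2^5*a 4*t^7 + 210*a 1^2*a 2^2*a 3^3*t^7 + 420*a 1^2*a 2^3*a 3*a 4*t^7 + 35*a 1^3*a 3^4*t^7 + 420*a 1^3*a 2*a 3^2*a 4*t^7 + 210*a 1^3*a 2^2*a 4^2*t^7 + 105*a 1^4*a 3*a 4^2*t^7 + 21*a 2^5*a 3^2*t^8 + 7*a 2^6*a 4*t^8 + 140*a 1*a 2^3*a 3^3*t^8 + 210*a 1*a 2^4*a 3*a 4*t^8 + 105*a 1^2*a 2*a 3^4*t^8 + 630*a 1^2*a 2^2*a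 3^2*a 4*t^8 + 210*a 1^2*a 2^3*a 4^2*t^8 + 140*a 1^3*a 3^3*a 4*t^8 + 420*a 1^3*a 2*a 3*a 4^2*t^8 + 35*a 1^4*a 4^3*t^8 + 35*a 2^4*a 3^3*t^9 + 42*a 2^5*a 3*a 4*t^9 + 105*a 1*a 2^2*a 3^4*t^9 + 420*a 1*a 2^3*a 3^2*a 4*t^9 + 105*a 1*a 2^4*a 4^2*t^9 + 21*a 1^2*a 3^5*t^9 + 420*a 1^2*a 2*a 3^3*a 4*t^9 + 630*a 1^2*a 2^2*a 3*a 4^2*t^9 + 210*a 1^3*a 3^2*a 4^2*t^9 + 140*a 1^3*a 2*a 4^3*t^9 + 35*a 2^3*a 3^4*t^10 + 105*a 2^4*a 3^2*a 4*t^10 + 21*a 2^5*a 4^2*t^10 + 42*a 1*a 2*a 3^5*t^10 + 420*a 1*a 2^2*a 3^3*a 4*t^10 + 420*a 1*a 2^3*a 3*a 4^2*t^10 + 105*a 1^2*a 3^4*a 4*t^10 + 630*a 1^2*a 2*a 3^2*a 4^2*t^10 + 210*a 1^2*a 2^2*a 4^3*t^10 + 140*a 1^3*a 3*a 4^3*t^10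 + 21*a 2^2*a 3^5*t^11 + 140*a 2^3*a 3^3*a 4*t^11 + 105*a 2^4*a 3*a 4^2*t^11 + 7*a 1*a 3^6*t^11 + 210*a 1*a 2*a 3^4*a 4*t^11 + 630*a 1*a 2^2*a 3^2*a 4^2*t^11 + 140*a 1*a 2^3*a 4^3*t^11 + 210*a 1^2*a 3^3*a 4^2*t^11 + 420*a 1^2*a 2*a 3*a 4^3*t^11 + 35*a 1^3*a 4^4*t^11 + 7*a 2*a 3^6*t^12 + 105*a 2^2*a 3^4*a 4*t^12 + 210*a 2^3*a 3^2*a 4^2*t^12 + 35*a 2^4*a 4^3*t^12 + 42*a 1*a 3^5*a 4*t^12 + 420*a 1*a 2*a 3^3*a 4^2*t^12 + 420*a 1*a 2^2*a 3*a 4^3*t^12 + 210*a 1^2*a 3^2*a 4^3*t^12 + 105*a 1^2*a 2*a 4^4*t^12 + 1*a 3^7*t^13 + 42*a 2*a 3^5*a 4*t^13 + 210*a 2^2*a 3^3*a 4^2*t^13 + 140*a 2^3*a 3*a 4^3*t^13 + 105*a 1*a 3^4*a 4^2*t^13 + 420*a 1*a 2*a 3^2*a 4^3*t^13 + 105*a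 1*a 2^2*a 4^4*t^13 + 105*a 1^2*a 3*a 4^4*t^13 + 7*a 3^6*a 4*t^14 + 105*a 2*a 3^4*a 4^2*t^14 + 210*a 2^2*a 3^2*a 4^3*t^14 + 35*a 2^3*a 4^4*t^14 + 140*a 1*a 3^3*a 4^3*t^14 + 210*a 1*a 2*a 3*a 4^4*t^14 + 21*a 1^2*a 4^5*t^14 + 21*a 3^5*a 4^2*t^15 + 140*a 2*a 3^3*a 4^3*t^15 + 105*a 2^2*a 3*a 4^4*t^15 + 105*a 1*a 3^2*a 4^4*t^15 + 42*a 1*a 2*a 4^5*t^15 + 35*a 3^4*a 4^3*t^16 + 105*a 2*a 3^2*a 4^4*t^16 + 21*a 2^2*a 4^5*t^16 + 42*a 1*a 3*a 4^5*t^16 + 35*a 3^3*a 4^4*t^17 + 42*a 2*a 3*a 4^5*t^17 + 7*a 1*a 4^6*t^17 + 21*a 3^2*a 4^5*t^18 + 7*a 2*a 4^6*t^18 + 7*a 3*a 4^6*t^19 + 1*a 4^7*t^20)) =O[𝓝 (0:ℝ)] (fun _ => (1:ℝ)) :=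
      (Continuous.tendsto (by fun_prop) 0).isBigO_one ℝ
    exact ((isBigO_refl (fun t : ℝ => t^8) (𝓝 0)).mul hQ).congr (fun t => by ring) (fun t => by ring)
  -- the Ψ side: first order expansion
  have hΨ2 : ContDiffAt ℝ 2 Ψ 0 := hΨsm.of_le (by exact_mod_cast natCast_le_infty 2)
  have hquad := quad_remainder hΨ2
  set L := fderiv ℝ Ψ 0 with hLdef
  set u : ℝ × ℝ := L (1, 0) with hu
  set v : ℝ × ℝ := L (0, 1) with hv
  have htend : Filter.Tendsto (fun t : ℝ => ((t ^ 4, t ^ 5 + ε₁ * t ^ 7) : ℝ × ℝ)) (𝓝 0) (𝓝 (0 : ℝ × ℝ)) := by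
    have hc : Continuous (fun t : ℝ => ((t ^ 4, t ^ 5 + ε₁ * t ^ 7) : ℝ × ℝ)) := by fun_prop
    apply hc.tendsto' 0 _ (by norm_num [Prod.ext_iff])
  have hcomp : (fun t : ℝ => Ψ ((t ^ 4, t ^ 5 + ε₁ * t ^ 7) : ℝ × ℝ) - Ψ 0 - L ((t ^ 4, t ^ 5 + ε₁ * t ^ 7) : ℝ × ℝ))
      =O[𝓝 (0:ℝ)] fun t => ‖((t ^ 4, t ^ 5 + ε₁ * t ^ 7) : ℝ × ℝ)‖ ^ 2 := hquad.comp_tendsto htend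
  have habs1 : ∀ᶠ t : ℝ in 𝓝 0, |t| ≤ 1 := by
    filter_upwards [Metric.closedBall_mem_nhds (0:ℝ) one_pos] with t ht
    simpa [Real.dist_eq] using ht
  have hγ4 : (fun t : ℝ => ‖((t ^ 4, t ^ 5 + ε₁ * t ^ 7) : ℝ × ℝ)‖) =O[𝓝 (0:ℝ)] fun t => t ^ 4 := by
    rw [Asymptotics.isBigO_iff]
    refine ⟨1 + |ε₁|, ?_⟩
    filter_upwards [habs1] with t ht
    have h1 : ‖t ^ 4‖ ≤ (1 + |ε₁|) * ‖t ^ 4‖ := by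
      have : (0:ℝ) ≤ |ε₁| * ‖t ^ 4‖ := by positivity
      linarith
    have h2 : ‖t ^ 5 + ε₁ * t ^ 7‖ ≤ (1 + |ε₁|) * ‖t ^ 4‖ := by
      have e5 : |t| ^ 5 ≤ |t| ^ 4 := pow_le_pow_of_le_one (abs_nonneg t) ht (by norm_num)
      have e7 : |t| ^ 7 ≤ |t| ^ 4 := pow_le_pow_of_le_one (abs_nonneg t) ht (by norm_num)
      have e0 : (0:ℝ) ≤ |ε₁| := abs_nonneg _
      calc ‖t ^ 5 + ε₁ * t ^ 7‖ ≤ ‖t ^ 5‖ + ‖ε₁ * t ^ 7‖ := norm_add_le _ _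
        _ = |t| ^ 5 + |ε₁| * |t| ^ 7 := by
            simp [Real.norm_eq_abs, abs_mul, abs_pow]
        _ ≤ |t| ^ 4 + |ε₁| * |t| ^ 4 := by nlinarith
        _ = (1 + |ε₁|) * ‖t ^ 4‖ := by rw [Real.norm_eq_abs, abs_pow]; ring
    rw [Real.norm_eq_abs (‖((t ^ 4, t ^ 5 + ε₁ * t ^ 7) : ℝ × ℝ)‖), abs_of_nonneg (norm_nonneg _), Prod.norm_def]
    exact max_le h1 h2
  have hγ8 : (fun t : ℝ => ‖((t ^ 4, t ^ 5 + ε₁ * t ^ 7) : ℝ × ℝ)‖ ^ 2) =O[𝓝 (0:ℝ)] fun t => t ^ 8 :=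
    (hγ4.pow 2).congr (fun _ => rfl) (fun t => by rw [← pow_mul])
  have hlinX : ∀ t : ℝ, L ((t ^ 4, t ^ 5 + ε₁ * t ^ 7) : ℝ × ℝ) = (((t^4 * u.1 + (t^5 + ε₁*t^7) * v.1), (t^4 * u.2 + (t^5 + ε₁*t^7) * v.2)) : ℝ × ℝ) := by
    intro t
    have hdecomp : ((t ^ 4, t ^ 5 + ε₁ * t ^ 7) : ℝ × ℝ)
        = t ^ 4 • (((1:ℝ), (0:ℝ)) : ℝ × ℝ) + (t ^ 5 + ε₁ * t ^ 7) • (((0:ℝ), (1:ℝ)) : ℝ × ℝ) := by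
      simp [Prod.ext_iff]
    rw [hdecomp, map_add, L.map_smul, L.map_smul, ← hu, ← hv]
    simp [Prod.ext_iff, smul_eq_mul]
  have hBig : (fun t : ℝ => ((ψ t ^ 4, ψ t ^ 5 + ε₂ * ψ t ^ 7) : ℝ × ℝ) - (((t^4 * u.1 + (t^5 + ε₁*t^7) * v.1), (t^4 * u.2 + (t^5 + ε₁*t^7) * v.2)) : ℝ × ℝ))
      =O[𝓝 (0:ℝ)] fun t => t ^ 8 := by
    refine ((hcomp.trans hγ8).congr' ?_ (Filter.EventuallyEq.refl _ _))
    filter_upwards [heq] with t ht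
    rw [ht, hΨ0, sub_zero, hlinX t]
  have comp1 : (fun t : ℝ => ψ t ^ 4 - (t^4 * u.1 + (t^5 + ε₁*t^7) * v.1)) =O[𝓝 (0:ℝ)] fun t => t ^ 8 := by
    have hfst := ((ContinuousLinearMap.fst ℝ ℝ ℝ).isBigO_comp
      (fun t : ℝ => ((ψ t ^ 4, ψ t ^ 5 + ε₂ * ψ t ^ 7) : ℝ × ℝ) - (((t^4 * u.1 + (t^5 + ε₁*t^7) * v.1), (t^4 * u.2 + (t^5 + ε₁*t^7) * v.2)) : ℝ × ℝ))
      (𝓝 (0:ℝ))).trans hBig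
    apply hfst.congr (fun t => ?_) (fun _ => rfl)
    simp
  have comp2 : (fun t : ℝ => (ψ t ^ 5 + ε₂ * ψ t ^ 7) - (t^4 * u.2 + (t^5 + ε₁*t^7) * v.2)) =O[𝓝 (0:ℝ)] fun t => t ^ 8 := by
    have hsnd := ((ContinuousLinearMap.snd ℝ ℝ ℝ).isBigO_comp
      (fun t : ℝ => ((ψ t ^ 4, ψ t ^ 5 + ε₂ * ψ t ^ 7) : ℝ × ℝ) - (((t^4 * u.1 + (t^5 + ε₁*t^7) * v.1), (t^4 * u.2 + (t^5 + ε₁*t^7) * v.2)) : ℝ × ℝ))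
      (𝓝 (0:ℝ))).trans hBig
    apply hsnd.congr (fun t => ?_) (fun _ => rfl)
    simp
  -- extract the coefficients of degrees ≤ 7
  have bigO1 : (fun t : ℝ => ∑ k ∈ Finset.range 8,
      (fun k : ℕ => if k = 4 then u.1 - a 1^4 else if k = 5 then v.1 - 4*a 1^3*a 2
        else if k = 6 then -(6*a 1^2*a 2^2 + 4*a 1^3*a 3)
        else if k = 7 then ε₁ * v.1 - (4*a 1*a 2^3 + 12*a 1^2*a 2*a 3 + 4*a 1^3*a 4)
        else 0) k * t ^ k) =O[𝓝[≠] (0:ℝ)] fun t => t ^ 8 := by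
    apply Asymptotics.IsBigO.mono ?_ nhdsWithin_le_nhds
    apply ((comp1.neg_left.add E4).add Htr4).congr (fun t => ?_) (fun _ => rfl)
    simp only [Finset.sum_range_succ, Finset.sum_range_zero]
    norm_num
    ring
  have bigO2 : (fun t : ℝ => ∑ k ∈ Finset.range 8,
      (fun k : ℕ => if k = 4 then u.2 else if k = 5 then v.2 - a 1^5
        else if k = 6 then -(5*a 1^4*a 2)
        else if k = 7 then ε₁ * v.2 - ((10*a 1^3*a 2^2 + 5*a 1^4*a 3) + ε₂ * a 1^7)
        else 0) k * t ^ k) =O[𝓝[≠] (0:ℝ)] fun t => t ^ 8 := by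
    apply Asymptotics.IsBigO.mono ?_ nhdsWithin_le_nhds
    apply ((((comp2.neg_left.add E5).add Htr5).add (E7.const_mul_left ε₂)).add
      (Htr7.const_mul_left ε₂)).congr (fun t => ?_) (fun _ => rfl)
    simp only [Finset.sum_range_succ, Finset.sum_range_zero]
    norm_num
    ring
  have hco1 := poly_coeff_zero 8 _ bigO1
  have hco2 := poly_coeff_zero 8 _ bigO2
  have e16 := hco1 6 (by norm_num)
  have e25 := hco2 5 (by norm_num)
  have e26 := hco2 6 (by norm_num)
  have e27 := hco2 7 (by norm_num)
  norm_num at e16 e25 e26 e27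
  -- conclude
  have ha2 : a 2 = 0 := e26.resolve_left ha1
  have ha3 : a 3 = 0 := by
    rw [ha2] at e16
    norm_num at e16
    exact e16.resolve_left ha1
  apply hε (a 1) ha1
  have h15 : a 1 ^ 5 ≠ 0 := pow_ne_zero _ ha1
  apply mul_right_cancel₀ h15
  have hv2 : v.2 = a 1 ^ 5 := by linarith
  rw [ha2, ha3, hv2] at e27
  norm_num at e27
  calc ε₁ * a 1 ^ 5 = ε₂ * a 1 ^ 7 := by linarith
    _ = ε₂ * a 1 ^ 2 * a 1 ^ 5 := by ring

end AuxLemmas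

/-- `Cusp_{(4,5)}`, `Cusp_{(4,5;+7)}` and `Cusp_{(4,5;−7)}` are
pairwise not 𝒜-equivalent at `t = 0`. -/
theorem stmt_18 :
    ¬ CEquivAt0 ∞ (fun t => (t ^ 4, t ^ 5)) (fun t => (t ^ 4, t ^ 5 + t ^ 7)) ∧
    ¬ CEquivAt0 ∞ (fun t => (t ^ 4, t ^ 5)) (fun t => (t ^ 4, t ^ 5 - t ^ 7)) ∧
    ¬ CEquivAt0 ∞ (fun t => (t ^ 4, t ^ 5 + t ^ 7)) (fun t => (t ^ 4, t ^ 5 - t ^ 7)) := by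
  have e0 : (fun t : ℝ => ((t ^ 4, t ^ 5) : ℝ × ℝ))
      = (fun t : ℝ => (t ^ 4, t ^ 5 + (0:ℝ) * t ^ 7)) := by
    funext t; simp
  have ep : (fun t : ℝ => ((t ^ 4, t ^ 5 + t ^ 7) : ℝ × ℝ))
      = (fun t : ℝ => (t ^ 4, t ^ 5 + (1:ℝ) * t ^ 7)) := by
    funext t; simp
  have em : (fun t : ℝ => ((t ^ 4, t ^ 5 - t ^ 7) : ℝ × ℝ))
      = (fun t : ℝ => (t ^ 4, t ^ 5 + (-1:ℝ) * t ^ 7)) := by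
    funext t; simp [Prod.ext_iff]; ring
  have h01 : ∀ c : ℝ, c ≠ 0 → (0:ℝ) ≠ 1 * c ^ 2 := by
    intro c hc h
    exact hc (pow_eq_zero_iff two_ne_zero |>.mp (by linarith))
  have h0m : ∀ c : ℝ, c ≠ 0 → (0:ℝ) ≠ (-1) * c ^ 2 := by
    intro c hc h
    exact hc (pow_eq_zero_iff two_ne_zero |>.mp (by linarith))
  have h1m : ∀ c : ℝ, c ≠ 0 → (1:ℝ) ≠ (-1) * c ^ 2 := by
    intro c hc h
    nlinarith [sq_nonneg c]
  refine ⟨?_, ?_, ?_⟩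
  · rw [e0, ep]; exact key 0 1 h01
  · rw [e0, em]; exact key 0 (-1) h0m
  · rw [ep, em]; exact key 1 (-1) h1m
end

section
/- The curves Cusp_{(4,5)}(t) = (t⁴, t⁵), Cusp_{(4,5;+7)}(t) = (t⁴, t⁵ + t⁷) and Cusp_{(4,5;−7)}(t) = (t⁴, t⁵ − t⁷) are pairwise C¹-equivalent at t = 0. -/
open Filter Topology
open scoped ContDiff

/-! ### Auxiliary lemmas -/

/-- The inverse function theorem packaged for `IsDiffeoGermAt0`. -/
lemma exists_diffeo_inv {E : Type*} [NormedAddCommGroup E] [NormedSpace ℝ E]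
    [CompleteSpace E] {Φ : E → E} {f' : E ≃L[ℝ] E} (h0 : Φ 0 = 0)
    (hc : ContDiffAt ℝ 1 Φ 0) (hd : HasFDerivAt Φ (f' : E →L[ℝ] E) 0) :
    ∃ Φinv, IsDiffeoGermAt0 1 Φ Φinv := by
  have hs : HasStrictFDerivAt Φ (f' : E →L[ℝ] E) 0 := hc.hasStrictFDerivAt' hd one_ne_zero
  refine ⟨hs.localInverse Φ f' 0, h0, ?_, hc, ?_, ?_, ?_⟩
  · have := hs.localInverse_apply_image
    rwa [h0] at this
  · have : ContDiffAt ℝ 1 (hc.localInverse hd one_ne_zero) (Φ 0) :=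
      hc.to_localInverse hd one_ne_zero
    rw [h0] at this
    exact this
  · exact hs.eventually_left_inverse
  · have := hs.eventually_right_inverse
    rwa [h0] at this

lemma IsDiffeoGermAt0.comp' {E : Type*} [NormedAddCommGroup E] [NormedSpace ℝ E]
    {Φ Φi Φ' Φi' : E → E} (h : IsDiffeoGermAt0 1 Φ Φi)
    (h' : IsDiffeoGermAt0 1 Φ' Φi') :
    IsDiffeoGermAt0 1 (fun x => Φ' (Φ x)) (fun x => Φi (Φi' x)) := by
  obtain ⟨h0, hi0, hc, hic, hl, hr⟩ := h
  obtain ⟨h0', hi0', hc', hic', hl', hr'⟩ := h'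
  have htΦ : Filter.Tendsto Φ (nhds 0) (nhds 0) := by
    have := hc.continuousAt
    rwa [ContinuousAt, h0] at this
  have htΦi' : Filter.Tendsto Φi' (nhds 0) (nhds 0) := by
    have := hic'.continuousAt
    rwa [ContinuousAt, hi0'] at this
  refine ⟨by show Φ' (Φ 0) = 0; rw [h0, h0'], by show Φi (Φi' 0) = 0; rw [hi0', hi0], ?_, ?_, ?_, ?_⟩
  · have : ContDiffAt ℝ 1 Φ' (Φ 0) := by rw [h0]; exact hc'
    exact this.comp 0 hc
  · have : ContDiffAt ℝ 1 Φi (Φi' 0) := by rw [hi0']; exact hic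
    exact this.comp 0 hic'
  · filter_upwards [htΦ.eventually hl', hl] with x hx1 hx2
    rw [hx1, hx2]
  · filter_upwards [htΦi'.eventually hr, hr'] with x hx1 hx2
    rw [hx1, hx2]

lemma CEquivAt0.symm' {γ₁ γ₂ : ℝ → ℝ × ℝ} (hγ₁ : ContinuousAt γ₁ 0)
    (h : CEquivAt0 1 γ₁ γ₂) : CEquivAt0 1 γ₂ γ₁ := by
  obtain ⟨h1, h2, ψ, ψi, Ψ, Ψi, hψ, hΨ, heq⟩ := h
  obtain ⟨hψ0, hψi0, hψc, hψic, hψl, hψr⟩ := hψ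
  obtain ⟨hΨ0, hΨi0, hΨc, hΨic, hΨl, hΨr⟩ := hΨ
  have htψi : Filter.Tendsto ψi (nhds 0) (nhds 0) := by
    have := hψic.continuousAt
    rwa [ContinuousAt, hψi0] at this
  have htγψi : Filter.Tendsto (fun s => γ₁ (ψi s)) (nhds 0) (nhds 0) := by
    have : Filter.Tendsto γ₁ (nhds 0) (nhds 0) := by rwa [ContinuousAt, h1] at hγ₁
    exact this.comp htψi
  refine ⟨h2, h1, ψi, ψ, Ψi, Ψ,
    ⟨hψi0, hψ0, hψic, hψc, hψr, hψl⟩, ⟨hΨi0, hΨ0, hΨic, hΨc, hΨr, hΨl⟩, ?_⟩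
  filter_upwards [htψi.eventually heq, hψr, htγψi.eventually hΨl] with s hA hB hC
  calc Ψi (γ₂ s) = Ψi (γ₂ (ψ (ψi s))) := by rw [hB]
    _ = Ψi (Ψ (γ₁ (ψi s))) := by rw [hA]
    _ = γ₁ (ψi s) := hC

lemma CEquivAt0.trans' {γ₁ γ₂ γ₃ : ℝ → ℝ × ℝ}
    (h12 : CEquivAt0 1 γ₁ γ₂) (h23 : CEquivAt0 1 γ₂ γ₃) : CEquivAt0 1 γ₁ γ₃ := by
  obtain ⟨h1, h2, ψ, ψi, Ψ, Ψi, hψ, hΨ, heq⟩ := h12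
  obtain ⟨_, h3, ψ', ψi', Ψ', Ψi', hψ', hΨ', heq'⟩ := h23
  have htψ : Filter.Tendsto ψ (nhds 0) (nhds 0) := by
    have := hψ.2.2.1.continuousAt
    rwa [ContinuousAt, hψ.1] at this
  refine ⟨h1, h3, fun t => ψ' (ψ t), fun t => ψi (ψi' t),
    fun p => Ψ' (Ψ p), fun p => Ψi (Ψi' p),
    hψ.comp' hψ', hΨ.comp' hΨ', ?_⟩
  filter_upwards [heq, htψ.eventually heq'] with t hA hB
  rw [hA, hB]

/-- The auxiliary function `q y = y * (y²)^(1/5) = sign(y)|y|^{7/5}`. -/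
noncomputable def qfun (y : ℝ) : ℝ := y * (y ^ 2) ^ (1 / 5 : ℝ)

lemma qfun_hasDerivAt (y : ℝ) :
    HasDerivAt qfun ((7 / 5) * (y ^ 2) ^ (1 / 5 : ℝ)) y := by
  rcases eq_or_ne y 0 with rfl | hy
  · have h0 : ((0:ℝ) ^ 2) ^ (1/5 : ℝ) = 0 := by
      rw [show ((0:ℝ) ^ 2) = 0 by norm_num, Real.zero_rpow (by norm_num)]
    rw [h0, mul_zero]
    rw [hasDerivAt_iff_tendsto_slope]
    have hcont : Filter.Tendsto (fun h : ℝ => (h ^ 2) ^ (1/5 : ℝ)) (nhds 0) (nhds 0) := by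
      have hc : ContinuousAt (fun h : ℝ => (h ^ 2) ^ (1/5 : ℝ)) 0 := by
        have h1 : ContinuousAt (fun x : ℝ => x ^ (1/5 : ℝ)) ((0:ℝ) ^ 2) :=
          Real.continuousAt_rpow_const _ _ (Or.inr (by norm_num))
        exact ContinuousAt.comp (x := (0:ℝ)) (f := fun h : ℝ => h ^ 2)
          (g := fun x : ℝ => x ^ (1/5 : ℝ)) h1 (continuous_pow 2).continuousAt
      have := hc.tendsto
      simpa [h0] using this
    refine (hcont.mono_left nhdsWithin_le_nhds).congr' ?_
    filter_upwards [self_mem_nhdsWithin] with h (hh : h ≠ 0)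
    rw [slope_def_field, qfun]
    simp only [qfun, ne_eq, OfNat.ofNat_ne_zero, not_false_eq_true, zero_pow, h0,
      mul_zero, zero_mul, sub_zero]
    field_simp
  · have hy2 : (0:ℝ) < y ^ 2 := by positivity
    have h1 : HasDerivAt (fun y : ℝ => y ^ 2) (2 * y) y := by
      simpa using hasDerivAt_pow 2 y
    have h3 : HasDerivAt (fun z : ℝ => (z ^ 2) ^ (1/5 : ℝ))
        ((2 * y) * (1/5 : ℝ) * (y ^ 2) ^ ((1/5 : ℝ) - 1)) y :=
      h1.rpow_const (Or.inl (pow_ne_zero 2 hy))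
    have h4 : HasDerivAt qfun
        (1 * ((y ^ 2) ^ (1/5 : ℝ)) +
          y * ((2 * y) * (1/5 : ℝ) * (y ^ 2) ^ ((1/5 : ℝ) - 1))) y :=
      (hasDerivAt_id y).mul h3
    have hval : 1 * ((y ^ 2) ^ (1/5 : ℝ)) +
        y * ((2 * y) * (1/5 : ℝ) * (y ^ 2) ^ ((1/5 : ℝ) - 1)) =
        (7 / 5) * (y ^ 2) ^ (1/5 : ℝ) := by
      have h5 : y ^ 2 * (y ^ 2) ^ ((1/5 : ℝ) - 1) = (y ^ 2) ^ (1/5 : ℝ) := by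
        rw [Real.rpow_sub hy2, Real.rpow_one]
        field_simp
      have h6 : y * ((2 * y) * (1/5 : ℝ) * (y ^ 2) ^ ((1/5 : ℝ) - 1)) =
          (2 / 5) * (y ^ 2 * (y ^ 2) ^ ((1/5 : ℝ) - 1)) := by ring
      rw [h6, h5]; ring
    rw [← hval]
    exact h4

lemma qfun_contDiff : ContDiff ℝ 1 qfun := by
  rw [contDiff_one_iff_deriv]
  constructor
  · intro y
    exact (qfun_hasDerivAt y).differentiableAt
  · have hderiv : deriv qfun = fun y => (7 / 5) * (y ^ 2) ^ (1/5 : ℝ) := by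
      funext y
      exact (qfun_hasDerivAt y).deriv
    rw [hderiv]
    have h1 : Continuous fun x : ℝ => x ^ (1/5 : ℝ) := by
      rw [continuous_iff_continuousAt]
      intro x
      exact Real.continuousAt_rpow_const _ _ (Or.inr (by norm_num))
    fun_prop

lemma qfun_zero : qfun 0 = 0 := by simp [qfun]

lemma qfun_hasDerivAt_zero : HasDerivAt qfun 0 0 := by
  have := qfun_hasDerivAt 0
  have h0 : ((0:ℝ) ^ 2) ^ (1/5 : ℝ) = 0 := by
    rw [show ((0:ℝ) ^ 2) = 0 by norm_num, Real.zero_rpow (by norm_num)]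
  rwa [h0, mul_zero] at this

lemma qfun_pow (t : ℝ) : qfun (t ^ 5) = t ^ 7 := by
  have h : ((t ^ 5) ^ 2 : ℝ) ^ (1/5 : ℝ) = t ^ 2 := by
    have he : ((t ^ 5) ^ 2 : ℝ) = (t ^ 2) ^ (5 : ℕ) := by ring
    rw [he, ← Real.rpow_natCast (t ^ 2) 5, ← Real.rpow_mul (sq_nonneg t)]
    norm_num
  rw [qfun, h]
  ring

/-- The basic equivalence: adding `c·t⁷` to the second component. -/
lemma cusp_equiv (c : ℝ) :
    CEquivAt0 1 (fun t => (t ^ 4, t ^ 5)) (fun t => (t ^ 4, t ^ 5 + c * t ^ 7)) := by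
  set Ψ : ℝ × ℝ → ℝ × ℝ := fun p => (p.1, p.2 + c * qfun p.2) with hΨdef
  have hΨ0 : Ψ 0 = 0 := by simp [Ψ, qfun_zero]
  have hΨc : ContDiffAt ℝ 1 Ψ 0 := by
    apply ContDiff.contDiffAt
    exact contDiff_fst.prodMk (contDiff_snd.add
      (contDiff_const.mul (qfun_contDiff.comp contDiff_snd)))
  let L : (ℝ × ℝ) ≃L[ℝ] (ℝ × ℝ) := ContinuousLinearEquiv.refl ℝ (ℝ × ℝ)
  have hΨd : HasFDerivAt Ψ (L : (ℝ × ℝ) →L[ℝ] (ℝ × ℝ)) 0 := by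
    have hg : HasDerivAt (fun y : ℝ => y + c * qfun y) 1 0 := by
      have := (hasDerivAt_id' (x := (0:ℝ))).add ((qfun_hasDerivAt_zero).const_mul c)
      rw [mul_zero, add_zero] at this
      exact this
    have h2 : HasFDerivAt (fun p : ℝ × ℝ => p.2 + c * qfun p.2)
        ((1:ℝ) • (ContinuousLinearMap.snd ℝ ℝ ℝ)) 0 := by
      exact hg.comp_hasFDerivAt (0 : ℝ × ℝ)
        (hasFDerivAt_snd : HasFDerivAt Prod.snd (ContinuousLinearMap.snd ℝ ℝ ℝ) (0 : ℝ × ℝ))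
    have h1 : HasFDerivAt (fun p : ℝ × ℝ => p.1)
        (ContinuousLinearMap.fst ℝ ℝ ℝ) 0 := hasFDerivAt_fst
    have h3 := h1.prodMk h2
    have hEq : ((ContinuousLinearMap.fst ℝ ℝ ℝ).prod
        ((1:ℝ) • (ContinuousLinearMap.snd ℝ ℝ ℝ))) = (L : (ℝ × ℝ) →L[ℝ] (ℝ × ℝ)) := by
      apply ContinuousLinearMap.ext
      intro v
      simp [L]
    rw [← hEq]
    exact h3
  obtain ⟨Ψi, hΨinv⟩ := exists_diffeo_inv hΨ0 hΨc hΨd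
  refine ⟨by norm_num, by norm_num, id, id, Ψ, Ψi,
    ⟨rfl, rfl, contDiffAt_id, contDiffAt_id,
      Filter.Eventually.of_forall fun _ => rfl,
      Filter.Eventually.of_forall fun _ => rfl⟩, hΨinv, ?_⟩
  refine Filter.Eventually.of_forall fun t => ?_
  simp only [Ψ, id, qfun_pow]

lemma cusp_continuousAt (c : ℝ) :
    ContinuousAt (fun t : ℝ => (t ^ 4, t ^ 5 + c * t ^ 7)) 0 := by fun_prop

/-- `Cusp_{(4,5)}`, `Cusp_{(4,5;+7)}` and `Cusp_{(4,5;−7)}` are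
pairwise `C¹`-equivalent at `t = 0`. -/
theorem stmt_19 :
    CEquivAt0 1 (fun t => (t ^ 4, t ^ 5)) (fun t => (t ^ 4, t ^ 5 + t ^ 7)) ∧
    CEquivAt0 1 (fun t => (t ^ 4, t ^ 5)) (fun t => (t ^ 4, t ^ 5 - t ^ 7)) ∧
    CEquivAt0 1 (fun t => (t ^ 4, t ^ 5 + t ^ 7)) (fun t => (t ^ 4, t ^ 5 - t ^ 7)) := by
  have e1 : (fun t : ℝ => (t ^ 4, t ^ 5 + t ^ 7)) =
      fun t : ℝ => (t ^ 4, t ^ 5 + 1 * t ^ 7) := by funext t; norm_num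
  have e2 : (fun t : ℝ => (t ^ 4, t ^ 5 - t ^ 7)) =
      fun t : ℝ => (t ^ 4, t ^ 5 + (-1) * t ^ 7) := by funext t; ring_nf
  have h12 : CEquivAt0 1 (fun t => (t ^ 4, t ^ 5)) (fun t => (t ^ 4, t ^ 5 + t ^ 7)) := by
    rw [e1]; exact cusp_equiv 1
  have h13 : CEquivAt0 1 (fun t => (t ^ 4, t ^ 5)) (fun t => (t ^ 4, t ^ 5 - t ^ 7)) := by
    rw [e2]; exact cusp_equiv (-1)
  have hc : ContinuousAt (fun t : ℝ => (t ^ 4, t ^ 5)) 0 := by fun_prop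
  exact ⟨h12, h13, (h12.symm' hc).trans' h13⟩
end
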